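/- arXiv:2009.11071 — 8 statements merged into one kernel-verified Lean document; each statement's English description precedes it below -/
import Mathlib

section
/- Let A be an n×n real matrix, B an n×m real matrix, K an m×n real matrix, C a p×n real matrix, M an n×p real matrix, and λ ∈ [0,1]. Set Φ = A + BK and, for γ ∈ {0,1}, let Ψ̃(γ) be the 2n×2n block matrix [[A - γAMC, 0], [γAMC, Φ]]. Suppose there exists a symmetric positive definite n×n matrix Ξ₁ such that Ξ₁ - (λ(A - AMC)Ξ₁(A - AMC)ᵀ + (1-λ)AΞ₁Aᵀ) is positive definite, and there exists a symmetric positive definite n×n matrix Ξ₂ such that Ξ₂ - ΦΞ₂Φᵀ is positive definite. Then there exists a symmetric positive definite 2n×2n matrix Ξ such that Ξ - (λΨ̃(1)ΞΨ̃(1)ᵀ + (1-λ)Ψ̃(0)ΞΨ̃(0)ᵀ) is positive definite. -/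
/-!
Take `Ξ = diag(Ξ₁, t Ξ₂)`. Because `Ψ̃(γ)` is block lower-triangular, `Ξ` minus its second moment
is the block matrix `[[D₁, -X], [-Xᴴ, t D₂ - Y]]`, where `D₁`, `D₂` are the two given positive
definite Lyapunov differences and `X`, `Y` do not depend on `t`. Its Schur complement
`t D₂ - (Y + Xᴴ D₁⁻¹ X)` is positive definite once `t` is large, since `D₂` is positive definite.
-/

open Matrix
open scoped MatrixOrder ComplexOrder

namespace Matrix

variable {𝕜 : Type*} [RCLike 𝕜] {k l m n : Type*} [Fintype l] [Fintype m] [Fintype n]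

theorem posDef_fromBlocks₁₁ [DecidableEq m] [DecidableEq n] {A : Matrix m m 𝕜}
    (B : Matrix m n 𝕜) {D : Matrix n n 𝕜} (hA : A.PosDef)
    (hS : (D - Bᴴ * A⁻¹ * B).PosDef) : (fromBlocks A B Bᴴ D).PosDef := by
  have := hA.isUnit.invertible
  refine ((PosDef.fromBlocks₁₁ B D hA).2 hS.posSemidef).posDef_iff_det_ne_zero.2 ?_
  rw [det_fromBlocks₁₁, invOf_eq_nonsing_inv]
  exact mul_ne_zero hA.det_pos.ne' hS.det_pos.ne'

section Spectrum

variable [DecidableEq n]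

theorem PosDef.exists_pos_algebraMap_le [Nonempty n] {D : Matrix n n 𝕜} (hD : D.PosDef) :
    ∃ r > 0, algebraMap ℝ _ r ≤ D :=
  (CFC.exists_pos_algebraMap_le_iff hD.isHermitian.isSelfAdjoint).2
    fun _ hx => hD.isStrictlyPositive.spectrum_pos hx

theorem IsHermitian.exists_le_algebraMap {N : Matrix n n 𝕜} (hN : N.IsHermitian) :
    ∃ s, N ≤ algebraMap ℝ _ s :=
  ⟨_, le_algebraMap_of_spectrum_le (fun _ hx => le_csSup
    (hN.spectrum_real_eq_range_eigenvalues ▸ (Set.finite_range _).bddAbove) hx) hN.isSelfAdjoint⟩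

theorem PosDef.exists_posDef_smul_sub {D N : Matrix n n 𝕜} (hD : D.PosDef)
    (hN : N.IsHermitian) : ∃ t : ℝ, 0 < t ∧ (t • D - N).PosDef := by
  cases isEmpty_or_nonempty n
  · exact ⟨1, one_pos, by rwa [Subsingleton.elim ((1 : ℝ) • D - N) D]⟩
  obtain ⟨r, hr, hrD⟩ := hD.exists_pos_algebraMap_le
  obtain ⟨s, hNs⟩ := hN.exists_le_algebraMap
  have ht : 0 < (|s| + 1) / r := by positivity
  refine ⟨(|s| + 1) / r, ht, ?_⟩
  have hmargin : 0 < (|s| + 1) / r * r - s := by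
    rw [div_mul_cancel₀ _ hr.ne']
    linarith [le_abs_self s]
  have hsplit : ((|s| + 1) / r) • D - N = ((|s| + 1) / r) • (D - algebraMap ℝ _ r)
      + (algebraMap ℝ _ s - N) + ((|s| + 1) / r * r - s) • (1 : Matrix n n 𝕜) := by
    simp only [Algebra.algebraMap_eq_smul_one]
    module
  rw [hsplit]
  exact PosDef.posSemidef_add (((le_iff.mp hrD).smul ht.le).add (le_iff.mp hNs))
    (PosDef.one.smul hmargin)

end Spectrum

/-- `𝔼[Ψ(γ) Ξ Ψ(γ)ᴴ]` for `γ ~ Bernoulli(lam)`, where `Ψ₁ = Ψ(1)` and `Ψ₀ = Ψ(0)`. -/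
def secondMoment (lam : ℝ) (Ψ₁ Ψ₀ : Matrix k l 𝕜) (Ξ : Matrix l l 𝕜) : Matrix k k 𝕜 :=
  lam • (Ψ₁ * Ξ * Ψ₁ᴴ) + (1 - lam) • (Ψ₀ * Ξ * Ψ₀ᴴ)

theorem secondMoment_self (lam : ℝ) (Φ : Matrix k l 𝕜) (Ξ : Matrix l l 𝕜) :
    secondMoment lam Φ Φ Ξ = Φ * Ξ * Φᴴ := by
  rw [secondMoment, ← add_smul, add_sub_cancel, one_smul]

theorem secondMoment_smul (lam c : ℝ) (Ψ₁ Ψ₀ : Matrix k l 𝕜) (Ξ : Matrix l l 𝕜) :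
    secondMoment lam Ψ₁ Ψ₀ (c • Ξ) = c • secondMoment lam Ψ₁ Ψ₀ Ξ := by
  simp only [secondMoment, Matrix.mul_smul, Matrix.smul_mul]
  module

theorem IsHermitian.secondMoment {Ξ : Matrix l l 𝕜} (hΞ : Ξ.IsHermitian) (lam : ℝ)
    (Ψ₁ Ψ₀ : Matrix k l 𝕜) : (secondMoment lam Ψ₁ Ψ₀ Ξ).IsHermitian :=
  ((isHermitian_mul_mul_conjTranspose Ψ₁ hΞ).smul (IsSelfAdjoint.all lam)).add
    ((isHermitian_mul_mul_conjTranspose Ψ₀ hΞ).smul (IsSelfAdjoint.all (1 - lam)))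

theorem secondMoment_fromBlocks (lam : ℝ) (P₁ P₀ : Matrix m m 𝕜) (Q₁ Q₀ : Matrix n m 𝕜)
    (R₁ R₀ : Matrix n n 𝕜) {Ξ₁ : Matrix m m 𝕜} (hΞ₁ : Ξ₁.IsHermitian) (Ξ₂ : Matrix n n 𝕜) :
    secondMoment lam (fromBlocks P₁ 0 Q₁ R₁) (fromBlocks P₀ 0 Q₀ R₀) (fromBlocks Ξ₁ 0 0 Ξ₂) =
      fromBlocks (secondMoment lam P₁ P₀ Ξ₁)
        (lam • (P₁ * Ξ₁ * Q₁ᴴ) + (1 - lam) • (P₀ * Ξ₁ * Q₀ᴴ))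
        (lam • (P₁ * Ξ₁ * Q₁ᴴ) + (1 - lam) • (P₀ * Ξ₁ * Q₀ᴴ))ᴴ
        (secondMoment lam Q₁ Q₀ Ξ₁ + secondMoment lam R₁ R₀ Ξ₂) := by
  simp only [secondMoment, fromBlocks_conjTranspose, fromBlocks_multiply, fromBlocks_smul,
    fromBlocks_add, conjTranspose_zero, Matrix.mul_zero, Matrix.zero_mul, add_zero, zero_add,
    conjTranspose_add, conjTranspose_smul, conjTranspose_mul, conjTranspose_conjTranspose,
    hΞ₁.eq, star_trivial, Matrix.mul_assoc]
  congr 1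
  module

theorem exists_posDef_sub_secondMoment_fromBlocks [DecidableEq m] [DecidableEq n] {lam : ℝ}
    {P₁ P₀ : Matrix m m 𝕜} (Q₁ Q₀ : Matrix n m 𝕜) {R₁ R₀ : Matrix n n 𝕜}
    {Ξ₁ : Matrix m m 𝕜} {Ξ₂ : Matrix n n 𝕜} (hΞ₁ : Ξ₁.PosDef) (hΞ₂ : Ξ₂.PosDef)
    (h₁ : (Ξ₁ - secondMoment lam P₁ P₀ Ξ₁).PosDef) (h₂ : (Ξ₂ - secondMoment lam R₁ R₀ Ξ₂).PosDef) :
    ∃ Ξ : Matrix (m ⊕ n) (m ⊕ n) 𝕜, Ξ.PosDef ∧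
      (Ξ - secondMoment lam (fromBlocks P₁ 0 Q₁ R₁) (fromBlocks P₀ 0 Q₀ R₀) Ξ).PosDef := by
  set X := lam • (P₁ * Ξ₁ * Q₁ᴴ) + (1 - lam) • (P₀ * Ξ₁ * Q₀ᴴ)
  obtain ⟨t, ht, hSchur⟩ := h₂.exists_posDef_smul_sub
    ((hΞ₁.isHermitian.secondMoment lam Q₁ Q₀).add
      (isHermitian_conjTranspose_mul_mul X h₁.isHermitian.inv))
  refine ⟨fromBlocks Ξ₁ 0 0 (t • Ξ₂), ?_, ?_⟩
  · simpa using posDef_fromBlocks₁₁ (0 : Matrix m n 𝕜) hΞ₁ (by simpa using hΞ₂.smul ht)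
  · rw [secondMoment_fromBlocks lam P₁ P₀ Q₁ Q₀ R₁ R₀ hΞ₁.isHermitian, secondMoment_smul]
    have hblocks : fromBlocks Ξ₁ 0 0 (t • Ξ₂) - fromBlocks (secondMoment lam P₁ P₀ Ξ₁) X Xᴴ
        (secondMoment lam Q₁ Q₀ Ξ₁ + t • secondMoment lam R₁ R₀ Ξ₂) =
        fromBlocks (Ξ₁ - secondMoment lam P₁ P₀ Ξ₁) (-X) (-X)ᴴ
          (t • (Ξ₂ - secondMoment lam R₁ R₀ Ξ₂) - secondMoment lam Q₁ Q₀ Ξ₁) := by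
      rw [sub_eq_add_neg, fromBlocks_neg, fromBlocks_add, conjTranspose_neg]
      congr 1 <;> module
    rw [hblocks]
    refine posDef_fromBlocks₁₁ _ h₁ ?_
    convert hSchur using 1
    simp only [conjTranspose_neg, Matrix.neg_mul, Matrix.mul_neg, neg_neg]
    abel

end Matrix

theorem stmt0_general (n p : ℕ)
    (A : Matrix (Fin n) (Fin n) ℝ) (C : Matrix (Fin p) (Fin n) ℝ)
    (M : Matrix (Fin n) (Fin p) ℝ) (lam : ℝ)
    (Φ : Matrix (Fin n) (Fin n) ℝ)
    (Ψ0 Ψ1 : Matrix (Fin n ⊕ Fin n) (Fin n ⊕ Fin n) ℝ)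
    (hΨ0 : Ψ0 = Matrix.fromBlocks A 0 0 Φ)
    (hΨ1 : Ψ1 = Matrix.fromBlocks (A - A * M * C) 0 (A * M * C) Φ)
    (Ξ₁ : Matrix (Fin n) (Fin n) ℝ) (hΞ₁ : Ξ₁.PosDef)
    (h₁ : (Ξ₁ - (lam • ((A - A * M * C) * Ξ₁ * (A - A * M * C)ᵀ)
            + (1 - lam) • (A * Ξ₁ * Aᵀ))).PosDef)
    (Ξ₂ : Matrix (Fin n) (Fin n) ℝ) (hΞ₂ : Ξ₂.PosDef)
    (h₂ : (Ξ₂ - Φ * Ξ₂ * Φᵀ).PosDef) :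
    ∃ Ξ : Matrix (Fin n ⊕ Fin n) (Fin n ⊕ Fin n) ℝ, Ξ.PosDef ∧
      (Ξ - (lam • (Ψ1 * Ξ * Ψ1ᵀ) + (1 - lam) • (Ψ0 * Ξ * Ψ0ᵀ))).PosDef := by
  subst hΨ0 hΨ1
  simp only [← conjTranspose_eq_transpose_of_trivial] at h₁ h₂ ⊢
  rw [← secondMoment_self lam Φ Ξ₂] at h₂
  exact exists_posDef_sub_secondMoment_fromBlocks (A * M * C) 0 hΞ₁ hΞ₂ h₁ h₂

/-- Mean-square stability of the block lower-triangular extended matrix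
`Ψ̃(γ) = [[A - γAMC, 0], [γAMC, Φ]]` (with `Φ = A + BK`) follows from Lyapunov
certificates for the two diagonal blocks. -/
theorem stmt0 (n m p : ℕ)
    (A : Matrix (Fin n) (Fin n) ℝ) (B : Matrix (Fin n) (Fin m) ℝ)
    (K : Matrix (Fin m) (Fin n) ℝ) (C : Matrix (Fin p) (Fin n) ℝ)
    (M : Matrix (Fin n) (Fin p) ℝ) (lam : ℝ) (hlam0 : 0 ≤ lam) (hlam1 : lam ≤ 1)
    (Φ : Matrix (Fin n) (Fin n) ℝ) (hΦ : Φ = A + B * K)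
    (Ψ0 Ψ1 : Matrix (Fin n ⊕ Fin n) (Fin n ⊕ Fin n) ℝ)
    (hΨ0 : Ψ0 = Matrix.fromBlocks A 0 0 Φ)
    (hΨ1 : Ψ1 = Matrix.fromBlocks (A - A * M * C) 0 (A * M * C) Φ)
    (Ξ₁ : Matrix (Fin n) (Fin n) ℝ) (hΞ₁ : Ξ₁.PosDef)
    (h₁ : (Ξ₁ - (lam • ((A - A * M * C) * Ξ₁ * (A - A * M * C)ᵀ)
            + (1 - lam) • (A * Ξ₁ * Aᵀ))).PosDef)
    (Ξ₂ : Matrix (Fin n) (Fin n) ℝ) (hΞ₂ : Ξ₂.PosDef)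
    (h₂ : (Ξ₂ - Φ * Ξ₂ * Φᵀ).PosDef) :
    ∃ Ξ : Matrix (Fin n ⊕ Fin n) (Fin n ⊕ Fin n) ℝ, Ξ.PosDef ∧
      (Ξ - (lam • (Ψ1 * Ξ * Ψ1ᵀ) + (1 - lam) • (Ψ0 * Ξ * Ψ0ᵀ))).PosDef :=
  stmt0_general n p A C M lam Φ Ψ0 Ψ1 hΨ0 hΨ1 Ξ₁ hΞ₁ h₁ Ξ₂ hΞ₂ h₂
end

section
/- Let (Ω, 𝓕, ℙ) be a probability space with a filtration (𝓕_k)_{k∈ℕ}, let β ∈ (0,1), and let (μ_k)_{k∈ℕ} and (c_k)_{k∈ℕ} be sequences of nonnegative integrable real random variables such that for every k, almost surely β·𝔼[μ_{k+1} | 𝓕_k] ≤ μ_k - 𝔼[c_k | 𝓕_k]. Then the series ∑_{k=0}^∞ β^k 𝔼[c_k] converges and ∑_{k=0}^∞ β^k 𝔼[c_k] ≤ 𝔼[μ_0]. -/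
open MeasureTheory Filter

/-- Supermartingale-type telescoping argument: if `β 𝔼[μ_{k+1} | 𝓕 k] ≤ μ_k - 𝔼[c_k | 𝓕 k]`
almost surely for every `k`, then `∑ β^k 𝔼[c_k] ≤ 𝔼[μ_0]`. -/
theorem stmt1 {Ω : Type*} {m0 : MeasurableSpace Ω} (P : Measure Ω)
    [IsProbabilityMeasure P] (ℱ : Filtration ℕ m0)
    (β : ℝ) (hβ0 : 0 < β) (hβ1 : β < 1)
    (μseq cseq : ℕ → Ω → ℝ)
    (hμnonneg : ∀ k ω, 0 ≤ μseq k ω) (hcnonneg : ∀ k ω, 0 ≤ cseq k ω)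
    (hμint : ∀ k, Integrable (μseq k) P) (hcint : ∀ k, Integrable (cseq k) P)
    (hstep : ∀ k, ∀ᵐ ω ∂P,
      β * (P[μseq (k + 1) | ℱ k]) ω ≤ μseq k ω - (P[cseq k | ℱ k]) ω) :
    Summable (fun k => β ^ k * ∫ ω, cseq k ω ∂P) ∧
      (∑' k, β ^ k * ∫ ω, cseq k ω ∂P) ≤ ∫ ω, μseq 0 ω ∂P := by
  set M : ℕ → ℝ := fun k => ∫ ω, μseq k ω ∂P with hM
  set C : ℕ → ℝ := fun k => ∫ ω, cseq k ω ∂P with hC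
  have hMnn : ∀ k, 0 ≤ M k := fun k => integral_nonneg (fun ω => hμnonneg k ω)
  have hCnn : ∀ k, 0 ≤ C k := fun k => integral_nonneg (fun ω => hcnonneg k ω)
  have key : ∀ k, β * M (k + 1) + C k ≤ M k := by
    intro k
    have h1 : ∫ ω, β * (P[μseq (k + 1) | ℱ k]) ω ∂P ≤
        ∫ ω, (μseq k ω - (P[cseq k | ℱ k]) ω) ∂P := by
      refine integral_mono_ae ?_ ?_ (hstep k)
      · exact (integrable_condExp).const_mul β
      · exact (hμint k).sub integrable_condExp
    have h2 : ∫ ω, β * (P[μseq (k + 1) | ℱ k]) ω ∂P = β * M (k + 1) := by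
      rw [integral_const_mul, integral_condExp (ℱ.le k)]
    have h3 : ∫ ω, (μseq k ω - (P[cseq k | ℱ k]) ω) ∂P = M k - C k := by
      rw [integral_sub (hμint k) integrable_condExp, integral_condExp (ℱ.le k)]
    rw [h2, h3] at h1
    linarith
  have hsum : ∀ n, (∑ k ∈ Finset.range n, β ^ k * C k) + β ^ n * M n ≤ M 0 := by
    intro n
    induction n with
    | zero => simp
    | succ n ih =>
      rw [Finset.sum_range_succ]
      have h4 : β ^ n * (β * M (n + 1) + C n) ≤ β ^ n * M n :=
        mul_le_mul_of_nonneg_left (key n) (pow_nonneg hβ0.le n)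
      have : β ^ (n + 1) * M (n + 1) = β ^ n * (β * M (n + 1)) := by ring
      nlinarith [pow_nonneg hβ0.le n]
  have hbd : ∀ n, (∑ k ∈ Finset.range n, β ^ k * C k) ≤ M 0 := by
    intro n
    have := hsum n
    nlinarith [mul_nonneg (pow_nonneg hβ0.le n) (hMnn n)]
  have hterm : ∀ k, 0 ≤ β ^ k * C k := fun k =>
    mul_nonneg (pow_nonneg hβ0.le k) (hCnn k)
  refine ⟨summable_of_sum_range_le hterm hbd, Summable.tsum_le_of_sum_range_le (summable_of_sum_range_le hterm hbd) hbd⟩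
end

section
/- Let β ∈ (0,1), let σ be a real number with 1 ≤ σ < 1/(1-β), let c ≥ 0, and let (J_k)_{k∈ℕ} and (ℓ_k)_{k∈ℕ} be sequences of nonnegative real numbers such that for all k: β·J_{k+1} ≤ J_k - ℓ_k and J_k ≤ σ·ℓ_k + c. Then limsup_{T→∞} (1/T)·∑_{k=0}^{T-1} ℓ_k ≤ c / (1/(1-β) - σ). -/
/-!
Summing the descent inequality `ℓ_k ≤ J_k - β J_{k+1}` telescopes to
`∑_{k<T} ℓ_k + β J_T ≤ β J_0 + (1 - β) ∑_{k<T} J_k`. Bounding each `J_k` by `σ ℓ_k + c` and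
dropping `β J_T ≥ 0` gives `(1 - (1 - β) σ) ∑_{k<T} ℓ_k ≤ β J_0 + (1 - β) c T`, where
`1 - (1 - β) σ > 0` is exactly the condition `σ < 1/(1-β)`. Dividing by `T`, the averages are
at most `(1 - β) c / (1 - (1 - β) σ) + O(1/T)`.
-/

open Filter Topology

section Descent

variable {β σ c : ℝ} {J ℓ : ℕ → ℝ}

theorem sum_range_add_mul_le_of_descent (hstep : ∀ k, β * J (k + 1) ≤ J k - ℓ k) (T : ℕ) :
    ∑ k ∈ Finset.range T, ℓ k + β * J T ≤ β * J 0 + (1 - β) * ∑ k ∈ Finset.range T, J k := by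
  induction T with
  | zero => simp
  | succ T ih =>
    rw [Finset.sum_range_succ, Finset.sum_range_succ]
    linarith [hstep T]

theorem mul_sum_range_le_of_descent (hβ0 : 0 ≤ β) (hβ1 : β ≤ 1) (hJ : ∀ k, 0 ≤ J k)
    (hstep : ∀ k, β * J (k + 1) ≤ J k - ℓ k) (hbound : ∀ k, J k ≤ σ * ℓ k + c) (T : ℕ) :
    (1 - (1 - β) * σ) * ∑ k ∈ Finset.range T, ℓ k ≤ β * J 0 + (1 - β) * c * T := by
  have hJsum : ∑ k ∈ Finset.range T, J k ≤ σ * ∑ k ∈ Finset.range T, ℓ k + c * T := by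
    calc ∑ k ∈ Finset.range T, J k ≤ ∑ k ∈ Finset.range T, (σ * ℓ k + c) :=
          Finset.sum_le_sum fun k _ => hbound k
      _ = σ * ∑ k ∈ Finset.range T, ℓ k + c * T := by
          rw [Finset.sum_add_distrib, Finset.mul_sum]; simp [mul_comm]
  have htel := sum_range_add_mul_le_of_descent hstep T
  nlinarith [mul_nonneg hβ0 (hJ T), mul_le_mul_of_nonneg_left hJsum (sub_nonneg.2 hβ1)]

end Descent

theorem limsup_le_of_eventually_le_add_div {u : ℕ → ℝ} {A B : ℝ}
    (hu : IsCoboundedUnder (· ≤ ·) atTop u) (h : ∀ᶠ T : ℕ in atTop, u T ≤ B + A / T) :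
    limsup u atTop ≤ B := by
  have hlim : Tendsto (fun T : ℕ => B + A / T) atTop (𝓝 B) := by
    simpa using tendsto_const_nhds.add (tendsto_const_div_atTop_nhds_zero_nat A)
  calc limsup u atTop ≤ limsup (fun T : ℕ => B + A / T) atTop :=
        limsup_le_limsup h hu hlim.isBoundedUnder_le
    _ = B := hlim.limsup_eq

theorem limsup_average_le_of_mul_sum_le {ℓ : ℕ → ℝ} {A B d : ℝ} (hℓ : ∀ k, 0 ≤ ℓ k)
    (hd : 0 < d) (hS : ∀ T : ℕ, d * ∑ k ∈ Finset.range T, ℓ k ≤ A + B * T) :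
    limsup (fun T : ℕ => (1 / (T : ℝ)) * ∑ k ∈ Finset.range T, ℓ k) atTop ≤ B / d := by
  have hcobdd : IsCoboundedUnder (· ≤ ·) atTop
      (fun T : ℕ => (1 / (T : ℝ)) * ∑ k ∈ Finset.range T, ℓ k) :=
    isCoboundedUnder_le_of_le atTop fun T =>
      mul_nonneg (by positivity) (Finset.sum_nonneg fun k _ => hℓ k)
  refine limsup_le_of_eventually_le_add_div (A := A / d) hcobdd ?_
  filter_upwards [eventually_gt_atTop 0] with T hT
  have hT : (0 : ℝ) < T := Nat.cast_pos.2 hT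
  have hsum : ∑ k ∈ Finset.range T, ℓ k ≤ (A + B * T) / d := (le_div_iff₀' hd).2 (hS T)
  calc (1 / (T : ℝ)) * ∑ k ∈ Finset.range T, ℓ k ≤ (1 / (T : ℝ)) * ((A + B * T) / d) := by
        gcongr
    _ = B / d + A / d / T := by field_simp; ring

theorem stmt3_general (β : ℝ) (hβ0 : 0 < β) (hβ1 : β < 1)
    (σ : ℝ) (hσ : σ < 1 / (1 - β))
    (c : ℝ)
    (J ℓ : ℕ → ℝ) (hJ : ∀ k, 0 ≤ J k) (hℓ : ∀ k, 0 ≤ ℓ k)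
    (hstep : ∀ k, β * J (k + 1) ≤ J k - ℓ k)
    (hbound : ∀ k, J k ≤ σ * ℓ k + c) :
    limsup (fun T : ℕ => (1 / (T : ℝ)) * ∑ k ∈ Finset.range T, ℓ k) atTop
      ≤ c / (1 / (1 - β) - σ) := by
  have hβ' : 0 < 1 - β := sub_pos.2 hβ1
  have hd : 0 < 1 - (1 - β) * σ := by
    have := (lt_div_iff₀ hβ').1 hσ
    linarith
  have hlimit : (1 - β) * c / (1 - (1 - β) * σ) = c / (1 / (1 - β) - σ) := by
    field_simp
  rw [← hlimit]
  exact limsup_average_le_of_mul_sum_le hℓ hd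
    (mul_sum_range_le_of_descent hβ0.le hβ1.le hJ hstep hbound)

/-- Parametric bound on the averaged undiscounted closed-loop cost: if
`β J_{k+1} ≤ J_k - ℓ_k` and `J_k ≤ σ ℓ_k + c` with `1 ≤ σ < 1/(1-β)`, then the
time-average of `ℓ_k` is asymptotically bounded by `c / (1/(1-β) - σ)`. -/
theorem stmt3 (β : ℝ) (hβ0 : 0 < β) (hβ1 : β < 1)
    (σ : ℝ) (hσ1 : 1 ≤ σ) (hσ : σ < 1 / (1 - β))
    (c : ℝ) (hc : 0 ≤ c)
    (J ℓ : ℕ → ℝ) (hJ : ∀ k, 0 ≤ J k) (hℓ : ∀ k, 0 ≤ ℓ k)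
    (hstep : ∀ k, β * J (k + 1) ≤ J k - ℓ k)
    (hbound : ∀ k, J k ≤ σ * ℓ k + c) :
    limsup (fun T : ℕ => (1 / (T : ℝ)) * ∑ k ∈ Finset.range T, ℓ k) atTop
      ≤ c / (1 / (1 - β) - σ) :=
  stmt3_general β hβ0 hβ1 σ hσ c J ℓ hJ hℓ hstep hbound
end

section
/- Let A₀, A₁ be n×n real matrices, λ ∈ [0,1], and β ∈ (0,1]. Suppose there exists a symmetric positive definite n×n matrix Ξ such that Ξ - β(λA₁ΞA₁ᵀ + (1-λ)A₀ΞA₀ᵀ) is positive definite. Then the n²×n² real matrix I - β(λ·A₁⊗A₁ + (1-λ)·A₀⊗A₀), where ⊗ denotes the Kronecker product, is invertible. -/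
/-!
Under vectorisation `(A ⊗ₖ A) *ᵥ vec X = vec (A X Aᵀ)`, so a kernel vector of the matrix is a
nonzero fixed point `X` of `Y ↦ β (λ A₁ Y A₁ᵀ + (1 - λ) A₀ Y A₀ᵀ)`. This map `L` is positive, and
the certificate gives `L Ξ ≤ θ Ξ` in the Loewner order for some `θ < 1`. So if a symmetric fixed
point `S` satisfies `-t Ξ ≤ S ≤ t Ξ`, it also satisfies this with `t θ` in place of `t`; iterating,
`S = 0`. A non-symmetric fixed point `X` is handled through its symmetric dilation
`[[0, X], [Xᵀ, 0]]`, a fixed point of the map built in the same way from the `1 ⊗ Aᵢ`, for which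
`1 ⊗ Ξ` is again a certificate.
-/

open Matrix Kronecker Filter Metric
open scoped MatrixOrder

namespace Matrix

variable {m : Type*} [Fintype m]

lemma smul_dotProduct_mulVec_smul (M : Matrix m m ℝ) (c : ℝ) (x : m → ℝ) :
    (c • x) ⬝ᵥ M *ᵥ (c • x) = c ^ 2 * (x ⬝ᵥ M *ᵥ x) := by
  rw [mulVec_smul, dotProduct_smul, smul_dotProduct, smul_eq_mul, smul_eq_mul]
  ring

lemma posSemidef_of_forall_mem_sphere {M : Matrix m m ℝ} (hM : M.IsHermitian)
    (h : ∀ x ∈ sphere (0 : m → ℝ) 1, 0 ≤ x ⬝ᵥ M *ᵥ x) : M.PosSemidef := by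
  refine posSemidef_iff_dotProduct_mulVec.mpr ⟨hM, fun x => ?_⟩
  rcases eq_or_ne x 0 with rfl | hx
  · simp
  have hnorm : 0 < ‖x‖ := norm_pos_iff.mpr hx
  have hunit : ‖x‖⁻¹ • x ∈ sphere (0 : m → ℝ) 1 := by
    simp [norm_smul, hnorm.ne']
  have := h _ hunit
  rw [smul_dotProduct_mulVec_smul] at this
  simpa using nonneg_of_mul_nonneg_right this (by positivity)

lemma PosDef.eventually_le_smul {P S : Matrix m m ℝ} (hP : P.PosDef) (hS : S.IsHermitian) :
    ∀ᶠ t : ℝ in atTop, S ≤ t • P := by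
  rcases isEmpty_or_nonempty m with _ | _
  · exact .of_forall fun t => (Subsingleton.elim S (t • P)).le
  have hpos : ∀ x ∈ sphere (0 : m → ℝ) 1, 0 < x ⬝ᵥ P *ᵥ x := fun x hx =>
    hP.dotProduct_mulVec_pos (ne_zero_of_mem_unit_sphere ⟨x, hx⟩)
  have hcont : ∀ M : Matrix m m ℝ, Continuous fun x : m → ℝ => x ⬝ᵥ M *ᵥ x := fun M => by
    simp only [dotProduct, mulVec]
    fun_prop
  obtain ⟨C, hC⟩ := (isCompact_sphere (0 : m → ℝ) 1).bddAbove_image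
    ((hcont S).continuousOn.div (hcont P).continuousOn fun x hx => (hpos x hx).ne')
  filter_upwards [eventually_ge_atTop C] with t ht
  refine posSemidef_of_forall_mem_sphere ((hP.isHermitian.smul (IsSelfAdjoint.all t)).sub hS)
    fun x hx => ?_
  have hratio : x ⬝ᵥ S *ᵥ x / x ⬝ᵥ P *ᵥ x ≤ t := (hC ⟨x, hx, rfl⟩).trans ht
  rw [div_le_iff₀ (hpos x hx)] at hratio
  simpa [sub_mulVec, smul_mulVec] using hratio

lemma exists_le_smul_of_posDef_sub {Ξ M : Matrix m m ℝ} (hΞ : Ξ.IsHermitian)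
    (h : (Ξ - M).PosDef) : ∃ θ : ℝ, 0 ≤ θ ∧ θ < 1 ∧ M ≤ θ • Ξ := by
  obtain ⟨s, hΞs, hs⟩ := ((h.eventually_le_smul hΞ).and (eventually_ge_atTop 1)).exists
  have hs0 : 0 < s := by linarith
  refine ⟨1 - s⁻¹, by linarith [inv_le_one_of_one_le₀ hs], by linarith [inv_pos.mpr hs0], ?_⟩
  have : s⁻¹ • Ξ ≤ Ξ - M := by
    simpa [smul_smul, hs0.ne'] using smul_le_smul_of_nonneg_left hΞs (inv_nonneg.mpr hs0.le)
  rw [sub_smul, one_smul]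
  exact le_sub_comm.mp this

lemma nonpos_of_forall_le_smul_of_tendsto_zero {T Ξ : Matrix m m ℝ} (hT : T.IsHermitian)
    {c : ℕ → ℝ} (hc : Tendsto c atTop (nhds 0)) (hle : ∀ k, T ≤ c k • Ξ) : T ≤ 0 := by
  rw [le_iff, zero_sub, posSemidef_iff_dotProduct_mulVec]
  refine ⟨hT.neg, fun x => ?_⟩
  have hbound : ∀ k, x ⬝ᵥ T *ᵥ x ≤ c k * (x ⬝ᵥ Ξ *ᵥ x) := fun k => by
    have := (le_iff.mp (hle k)).dotProduct_mulVec_nonneg x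
    simp only [star_trivial, sub_mulVec, dotProduct_sub, smul_mulVec, dotProduct_smul,
      smul_eq_mul] at this
    linarith
  have hlim : x ⬝ᵥ T *ᵥ x ≤ 0 :=
    ge_of_tendsto' (by simpa using hc.mul_const (x ⬝ᵥ Ξ *ᵥ x)) hbound
  simpa only [star_trivial, neg_mulVec, dotProduct_neg, neg_nonneg] using hlim

theorem eq_zero_of_map_eq_self (L : Matrix m m ℝ →ₚ[ℝ] Matrix m m ℝ) {Ξ : Matrix m m ℝ}
    (hΞ : Ξ.PosDef) (hlyap : (Ξ - L Ξ).PosDef) {S : Matrix m m ℝ} (hS : S.IsHermitian)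
    (hfix : L S = S) : S = 0 := by
  obtain ⟨θ, hθ0, hθ1, hθ⟩ := exists_le_smul_of_posDef_sub hΞ.isHermitian hlyap
  have hstep {T : Matrix m m ℝ} (hT : L T = T) {t : ℝ} (ht : 0 ≤ t) (hle : T ≤ t • Ξ) :
      T ≤ (t * θ) • Ξ :=
    calc T = L T := hT.symm
      _ ≤ L (t • Ξ) := OrderHomClass.mono L hle
      _ = t • L Ξ := map_smul L t Ξ
      _ ≤ t • θ • Ξ := smul_le_smul_of_nonneg_left hθ ht
      _ = (t * θ) • Ξ := smul_smul ..
  have hnonpos {T : Matrix m m ℝ} (hT : T.IsHermitian) (hfixT : L T = T) : T ≤ 0 := by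
    obtain ⟨t, hle, ht⟩ := ((hΞ.eventually_le_smul hT).and (eventually_ge_atTop 0)).exists
    have hiter (k : ℕ) : T ≤ (t * θ ^ k) • Ξ := by
      induction k with
      | zero => simpa using hle
      | succ k ih => simpa [pow_succ, mul_assoc] using hstep hfixT (by positivity) ih
    exact nonpos_of_forall_le_smul_of_tendsto_zero hT
      (by simpa using (tendsto_pow_atTop_nhds_zero_of_lt_one hθ0 hθ1).const_mul t) hiter
  exact le_antisymm (hnonpos hS hfix) (neg_nonpos.mp (hnonpos hS.neg (by rw [map_neg, hfix])))

end Matrix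

section Lyapunov

variable {m : Type*} [Fintype m] (β lam : ℝ) (A₀ A₁ : Matrix m m ℝ)

@[simps]
def lyapunovMap : Matrix m m ℝ →ₗ[ℝ] Matrix m m ℝ where
  toFun Y := β • (lam • (A₁ * Y * A₁ᵀ) + (1 - lam) • (A₀ * Y * A₀ᵀ))
  map_add' Y Z := by simp only [Matrix.mul_add, Matrix.add_mul]; module
  map_smul' c Y := by simp only [Matrix.mul_smul, Matrix.smul_mul, RingHom.id_apply]; module

variable {β lam A₀ A₁}

lemma lyapunovMap_nonneg (hβ : 0 ≤ β) (hlam0 : 0 ≤ lam) (hlam1 : lam ≤ 1)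
    {Y : Matrix m m ℝ} (hY : 0 ≤ Y) : 0 ≤ lyapunovMap β lam A₀ A₁ Y := by
  have hconj (A : Matrix m m ℝ) : 0 ≤ A * Y * Aᵀ := by
    simpa using (hY.posSemidef.mul_mul_conjTranspose_same A).nonneg
  exact smul_nonneg hβ (add_nonneg (smul_nonneg hlam0 (hconj A₁))
    (smul_nonneg (sub_nonneg.mpr hlam1) (hconj A₀)))

lemma lyapunovMap_transpose (Y : Matrix m m ℝ) :
    lyapunovMap β lam A₀ A₁ Yᵀ = (lyapunovMap β lam A₀ A₁ Y)ᵀ := by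
  simp [Matrix.mul_assoc]

lemma lyapunovMap_one_kronecker {ι : Type*} [Fintype ι] [DecidableEq ι] (E : Matrix ι ι ℝ)
    (Y : Matrix m m ℝ) :
    lyapunovMap β lam (1 ⊗ₖ A₀) (1 ⊗ₖ A₁) (E ⊗ₖ Y) = E ⊗ₖ lyapunovMap β lam A₀ A₁ Y := by
  simp [← kroneckerMap_transpose, ← mul_kronecker_mul, kronecker_add, kronecker_smul]

theorem eq_zero_of_lyapunovMap_eq_self (hβ : 0 ≤ β) (hlam0 : 0 ≤ lam) (hlam1 : lam ≤ 1)
    {Ξ : Matrix m m ℝ} (hΞ : Ξ.PosDef) (hlyap : (Ξ - lyapunovMap β lam A₀ A₁ Ξ).PosDef)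
    {X : Matrix m m ℝ} (hX : lyapunovMap β lam A₀ A₁ X = X) : X = 0 := by
  let E : Matrix (Fin 2) (Fin 2) ℝ := single 0 1 1
  -- `E ⊗ₖ X + Eᵀ ⊗ₖ Xᵀ` is the dilation `[[0, X], [Xᵀ, 0]]`
  let L₂ := lyapunovMap β lam ((1 : Matrix (Fin 2) (Fin 2) ℝ) ⊗ₖ A₀) (1 ⊗ₖ A₁)
  have hH : (E ⊗ₖ X + Eᵀ ⊗ₖ Xᵀ).IsHermitian := by
    simp [IsHermitian, ← kroneckerMap_transpose, add_comm]
  have hfix : L₂ (E ⊗ₖ X + Eᵀ ⊗ₖ Xᵀ) = E ⊗ₖ X + Eᵀ ⊗ₖ Xᵀ := by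
    rw [map_add, lyapunovMap_one_kronecker, lyapunovMap_one_kronecker, lyapunovMap_transpose, hX]
  have hlyap₂ : ((1 : Matrix (Fin 2) (Fin 2) ℝ) ⊗ₖ Ξ - L₂ (1 ⊗ₖ Ξ)).PosDef := by
    have : (1 : Matrix (Fin 2) (Fin 2) ℝ) ⊗ₖ Ξ - L₂ (1 ⊗ₖ Ξ)
        = 1 ⊗ₖ (Ξ - lyapunovMap β lam A₀ A₁ Ξ) := by
      rw [lyapunovMap_one_kronecker]
      ext ⟨a, i⟩ ⟨b, j⟩
      simp only [Matrix.sub_apply, kronecker_apply, mul_sub]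
    exact this ▸ PosDef.one.kronecker hlyap
  have hH0 := eq_zero_of_map_eq_self (.mk₀ L₂ fun _ => lyapunovMap_nonneg hβ hlam0 hlam1)
    (PosDef.one.kronecker hΞ) hlyap₂ hH hfix
  ext i j
  simpa [E] using congr_fun (congr_fun hH0 (0, i)) (1, j)

lemma one_sub_smul_kronecker_mulVec_vec [DecidableEq m] (X : Matrix m m ℝ) :
    (1 - β • (lam • (A₁ ⊗ₖ A₁) + (1 - lam) • (A₀ ⊗ₖ A₀))) *ᵥ X.vec
      = (X - lyapunovMap β lam A₀ A₁ X).vec := by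
  simp [sub_mulVec, add_mulVec, smul_mulVec, kronecker_mulVec_vec, vec_sub, vec_add, vec_smul]

end Lyapunov

theorem stmt6_general (n : ℕ) (A₀ A₁ : Matrix (Fin n) (Fin n) ℝ)
    (lam : ℝ) (hlam0 : 0 ≤ lam) (hlam1 : lam ≤ 1)
    (β : ℝ) (hβ0 : 0 < β)
    (Ξ : Matrix (Fin n) (Fin n) ℝ) (hΞ : Ξ.PosDef)
    (hlyap : (Ξ - β • (lam • (A₁ * Ξ * A₁ᵀ) + (1 - lam) • (A₀ * Ξ * A₀ᵀ))).PosDef) :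
    IsUnit ((1 : Matrix (Fin n × Fin n) (Fin n × Fin n) ℝ)
      - β • (lam • (A₁ ⊗ₖ A₁) + (1 - lam) • (A₀ ⊗ₖ A₀))) := by
  refine mulVec_injective_iff_isUnit.mp <|
    (injective_iff_map_eq_zero (mulVecLin _)).mpr fun v hv => ?_
  obtain ⟨X, rfl⟩ := vec_bijective.surjective v
  rw [coe_mulVecLin, one_sub_smul_kronecker_mulVec_vec, vec_eq_zero_iff, sub_eq_zero] at hv
  rw [eq_zero_of_lyapunovMap_eq_self hβ0.le hlam0 hlam1 hΞ hlyap hv.symm, vec_zero]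

/-- A Lyapunov certificate for the discounted mean-square Lyapunov operator implies
invertibility of `I - β(λ A₁⊗A₁ + (1-λ) A₀⊗A₀)`. -/
theorem stmt6 (n : ℕ) (A₀ A₁ : Matrix (Fin n) (Fin n) ℝ)
    (lam : ℝ) (hlam0 : 0 ≤ lam) (hlam1 : lam ≤ 1)
    (β : ℝ) (hβ0 : 0 < β) (hβ1 : β ≤ 1)
    (Ξ : Matrix (Fin n) (Fin n) ℝ) (hΞ : Ξ.PosDef)
    (hlyap : (Ξ - β • (lam • (A₁ * Ξ * A₁ᵀ) + (1 - lam) • (A₀ * Ξ * A₀ᵀ))).PosDef) :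
    IsUnit ((1 : Matrix (Fin n × Fin n) (Fin n × Fin n) ℝ)
      - β • (lam • (A₁ ⊗ₖ A₁) + (1 - lam) • (A₀ ⊗ₖ A₀))) :=
  stmt6_general n A₀ A₁ lam hlam0 hlam1 β hβ0 Ξ hΞ hlyap
end

section
/- Let A₀, A₁ be n×n real matrices, λ ∈ [0,1], β ∈ (0,1], and define 𝓛(X) = λA₁XA₁ᵀ + (1-λ)A₀XA₀ᵀ for n×n real matrices X. Suppose there exists a symmetric positive definite matrix Ξ such that Ξ - β·𝓛(Ξ) is positive definite. Then for every symmetric n×n real matrix C there exists a unique symmetric n×n matrix P satisfying P = β·𝓛(P) + C; moreover, if C is positive semidefinite then this unique solution P is positive semidefinite. -/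
/-!
The map `T = β 𝓛` is linear and positive (it maps positive semidefinite matrices to positive
semidefinite ones), and the certificate gives `T Ξ ≤ ρ Ξ` in the Loewner order for some
`0 ≤ ρ < 1`. If `P = T P + C` with `C ≥ 0` and `P + t Ξ ≥ 0`, then
`P + ρ t Ξ = T (P + t Ξ) + C + t (ρ Ξ - T Ξ) ≥ 0`; starting from any `t` with `P + t Ξ ≥ 0` and
letting `ρ ^ k t → 0` gives `P ≥ 0`. Applied to `± X`, this shows that a symmetric fixed point of
`T` vanishes, so `1 - T` is injective, hence bijective, on the finite-dimensional space of
symmetric matrices.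
-/

open Matrix
open scoped MatrixOrder

namespace Matrix

variable {ι : Type*}

lemma transpose_eq_self_iff_isSelfAdjoint {X : Matrix ι ι ℝ} : Xᵀ = X ↔ IsSelfAdjoint X := by
  rw [← isHermitian_iff_isSelfAdjoint, IsHermitian, conjTranspose_eq_transpose_of_trivial]

variable [Fintype ι]

lemma isClosed_setOf_nonneg : IsClosed {X : Matrix ι ι ℝ | 0 ≤ X} := by
  have : {X : Matrix ι ι ℝ | 0 ≤ X} =
      {X | Xᴴ = X} ∩ ⋂ x : ι → ℝ, {X | 0 ≤ x ⬝ᵥ (X *ᵥ x)} := by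
    ext X
    simp [nonneg_iff_posSemidef, posSemidef_iff_dotProduct_mulVec, IsHermitian]
  rw [this]
  refine (isClosed_eq continuous_id.matrix_conjTranspose continuous_id).inter
    (isClosed_iInter fun x => isClosed_le continuous_const ?_)
  exact continuous_const.dotProduct (continuous_id.matrix_mulVec continuous_const)

variable [DecidableEq ι]

lemma PosDef.exists_pos_smul_le {D Ξ : Matrix ι ι ℝ} (hD : D.PosDef) (hΞ : Ξ.IsHermitian) :
    ∃ ε : ℝ, 0 < ε ∧ ε • Ξ ≤ D := by
  cases isEmpty_or_nonempty ι
  · exact ⟨1, one_pos, (Subsingleton.elim _ _ : (1 : ℝ) • Ξ = D).le⟩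
  obtain ⟨r, hr, hrD⟩ := (CFC.exists_pos_algebraMap_le_iff hD.isHermitian.isSelfAdjoint).mpr
    fun _ hx => (isStrictlyPositive_iff_posDef.mpr hD).spectrum_pos hx
  obtain ⟨s, hs⟩ := (ContinuousFunctionalCalculus.isCompact_spectrum
    (R := ℝ) (p := IsSelfAdjoint) Ξ).bddAbove
  have hs₁ : 0 < max s 1 := lt_max_of_lt_right one_pos
  have hΞs : Ξ ≤ algebraMap ℝ _ (max s 1) :=
    le_algebraMap_of_spectrum_le (fun x hx => (hs hx).trans (le_max_left _ _)) hΞ.isSelfAdjoint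
  refine ⟨r / max s 1, div_pos hr hs₁, ?_⟩
  calc (r / max s 1) • Ξ ≤ (r / max s 1) • algebraMap ℝ _ (max s 1) :=
        smul_le_smul_of_nonneg_left hΞs (div_pos hr hs₁).le
    _ = algebraMap ℝ _ r := by
        rw [Algebra.algebraMap_eq_smul_one, Algebra.algebraMap_eq_smul_one, smul_smul,
          div_mul_cancel₀ _ hs₁.ne']
    _ ≤ D := hrD

lemma IsHermitian.exists_nonneg_add_smul {X Ξ : Matrix ι ι ℝ} (hX : X.IsHermitian)
    (hΞ : Ξ.PosDef) : ∃ c : ℝ, 0 ≤ c ∧ 0 ≤ X + c • Ξ := by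
  obtain ⟨ε, hε, hεX⟩ := hΞ.exists_pos_smul_le hX.neg
  refine ⟨ε⁻¹, inv_nonneg.mpr hε.le, ?_⟩
  have : X + ε⁻¹ • Ξ = ε⁻¹ • (Ξ - ε • -X) := by
    rw [smul_sub, smul_smul, inv_mul_cancel₀ hε.ne', one_smul, sub_neg_eq_add, add_comm]
  rw [this]
  exact smul_nonneg (inv_nonneg.mpr hε.le) (sub_nonneg.mpr hεX)

/-- The paper's `𝓛`: the second-moment map of `x ↦ A_θ x` with `P(θ = 1) = lam`,
`P(θ = 0) = 1 - lam`. -/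
def secondMomentMap (lam : ℝ) (A₀ A₁ : Matrix ι ι ℝ) : Matrix ι ι ℝ →ₗ[ℝ] Matrix ι ι ℝ :=
  lam • LinearMap.mulLeftRight ℝ (A₁, A₁ᵀ) + (1 - lam) • LinearMap.mulLeftRight ℝ (A₀, A₀ᵀ)

lemma secondMomentMap_nonneg {lam : ℝ} (hlam0 : 0 ≤ lam) (hlam1 : lam ≤ 1)
    (A₀ A₁ : Matrix ι ι ℝ) {X : Matrix ι ι ℝ} (hX : 0 ≤ X) : 0 ≤ secondMomentMap lam A₀ A₁ X := by
  have hconj : ∀ A : Matrix ι ι ℝ, 0 ≤ A * X * Aᵀ := fun A => by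
    simpa [star_eq_conjTranspose, conjTranspose_eq_transpose_of_trivial] using
      star_right_conjugate_nonneg hX A
  exact add_nonneg (smul_nonneg hlam0 (hconj A₁)) (smul_nonneg (sub_nonneg.mpr hlam1) (hconj A₀))

end Matrix

namespace PositiveLinearMap

variable {ι : Type*} [Fintype ι] [DecidableEq ι] (T : Matrix ι ι ℝ →ₚ[ℝ] Matrix ι ι ℝ)
  {Ξ P C : Matrix ι ι ℝ}

lemma isSelfAdjoint_map {X : Matrix ι ι ℝ} (hX : IsSelfAdjoint X) : IsSelfAdjoint (T X) := by
  obtain ⟨c, -, hXc⟩ := hX.isHermitian.exists_nonneg_add_smul PosDef.one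
  have hT : T X = T (X + c • 1) - c • T 1 := by rw [map_add, map_smul, add_sub_cancel_right]
  rw [hT]
  exact (IsSelfAdjoint.of_nonneg (T.map_nonneg hXc)).sub
    ((IsSelfAdjoint.all c).smul (IsSelfAdjoint.of_nonneg (T.map_nonneg zero_le_one)))

lemma nonneg_add_mul_smul_of_eq_map_add {ρ t : ℝ} (hP : P = T P + C) (hC : 0 ≤ C)
    (hρ : T Ξ ≤ ρ • Ξ) (ht : 0 ≤ t) (hPt : 0 ≤ P + t • Ξ) : 0 ≤ P + (ρ * t) • Ξ := by
  have : P + (ρ * t) • Ξ = T (P + t • Ξ) + C + t • (ρ • Ξ - T Ξ) := by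
    rw [map_add, map_smul]
    nth_rewrite 1 [hP]
    module
  rw [this]
  exact add_nonneg (add_nonneg (T.map_nonneg hPt) hC) (smul_nonneg ht (sub_nonneg.mpr hρ))

theorem nonneg_of_eq_map_add (hΞ : Ξ.PosDef) (hlyap : (Ξ - T Ξ).PosDef)
    (hPsa : IsSelfAdjoint P) (hC : 0 ≤ C) (hP : P = T P + C) : 0 ≤ P := by
  obtain ⟨ε, hε, hεΞ⟩ := hlyap.exists_pos_smul_le hΞ.isHermitian
  -- capping `ε` at `1` keeps the contraction factor `ρ` nonnegative
  set ρ := 1 - min ε 1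
  have hρ₀ : 0 ≤ ρ := sub_nonneg.mpr (min_le_right _ _)
  have hρ₁ : ρ < 1 := sub_lt_self _ (lt_min hε one_pos)
  have hTΞ : T Ξ ≤ ρ • Ξ := by
    have : min ε 1 • Ξ ≤ ε • Ξ :=
      smul_le_smul_of_nonneg_right (min_le_left _ _) hΞ.posSemidef.nonneg
    rw [sub_smul, one_smul, le_sub_comm]
    exact this.trans hεΞ
  obtain ⟨c, hc, hPc⟩ := hPsa.isHermitian.exists_nonneg_add_smul hΞ
  have hiter : ∀ k : ℕ, 0 ≤ P + (ρ ^ k * c) • Ξ := by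
    intro k
    induction k with
    | zero => simpa using hPc
    | succ k ih =>
      rw [pow_succ', mul_assoc]
      exact T.nonneg_add_mul_smul_of_eq_map_add hP hC hTΞ (by positivity) ih
  have hlim : Filter.Tendsto (fun k : ℕ => P + (ρ ^ k * c) • Ξ) Filter.atTop (nhds P) := by
    simpa using tendsto_const_nhds.add
      (((tendsto_pow_atTop_nhds_zero_of_lt_one hρ₀ hρ₁).mul_const c).smul_const Ξ)
  exact isClosed_setOf_nonneg.mem_of_tendsto hlim (Filter.Eventually.of_forall hiter)

lemma eq_zero_of_eq_map (hΞ : Ξ.PosDef) (hlyap : (Ξ - T Ξ).PosDef) {X : Matrix ι ι ℝ}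
    (hX : IsSelfAdjoint X) (hfix : X = T X) : X = 0 :=
  le_antisymm
    (neg_nonneg.mp <| T.nonneg_of_eq_map_add hΞ hlyap hX.neg le_rfl <| by
      rw [map_neg, ← hfix, add_zero])
    (T.nonneg_of_eq_map_add hΞ hlyap hX le_rfl <| by rw [← hfix, add_zero])

theorem existsUnique_eq_map_add (hΞ : Ξ.PosDef) (hlyap : (Ξ - T Ξ).PosDef)
    (hC : IsSelfAdjoint C) : ∃! P : Matrix ι ι ℝ, IsSelfAdjoint P ∧ P = T P + C := by
  let S := selfAdjoint.submodule ℝ (Matrix ι ι ℝ)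
  let g : S →ₗ[ℝ] S := (LinearMap.id - T.toLinearMap).restrict
    fun X hX => (show IsSelfAdjoint X from hX).sub (T.isSelfAdjoint_map hX)
  have hg : Function.Injective g := by
    refine (injective_iff_map_eq_zero g).mpr fun X hX => Subtype.ext ?_
    exact T.eq_zero_of_eq_map hΞ hlyap X.2 (sub_eq_zero.mp (congrArg Subtype.val hX))
  obtain ⟨P, hP⟩ := LinearMap.injective_iff_surjective.mp hg ⟨C, hC⟩
  have hPC : P.1 - T P.1 = C := congrArg Subtype.val hP
  refine ⟨P, ⟨P.2, by rw [← hPC]; abel⟩, fun Q ⟨hQ, hQC⟩ => sub_eq_zero.mp ?_⟩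
  refine T.eq_zero_of_eq_map hΞ hlyap (hQ.sub P.2) ?_
  rw [map_sub]
  nth_rewrite 1 [hQC, ← hPC]
  abel

end PositiveLinearMap

theorem stmt7_general (n : ℕ) (A₀ A₁ : Matrix (Fin n) (Fin n) ℝ)
    (lam : ℝ) (hlam0 : 0 ≤ lam) (hlam1 : lam ≤ 1)
    (β : ℝ) (hβ0 : 0 < β)
    (L : Matrix (Fin n) (Fin n) ℝ → Matrix (Fin n) (Fin n) ℝ)
    (hL : ∀ X, L X = lam • (A₁ * X * A₁ᵀ) + (1 - lam) • (A₀ * X * A₀ᵀ))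
    (Ξ : Matrix (Fin n) (Fin n) ℝ) (hΞ : Ξ.PosDef)
    (hlyap : (Ξ - β • L Ξ).PosDef)
    (C : Matrix (Fin n) (Fin n) ℝ) (hC : Cᵀ = C) :
    (∃! P : Matrix (Fin n) (Fin n) ℝ, Pᵀ = P ∧ P = β • L P + C) ∧
      (C.PosSemidef → ∀ P : Matrix (Fin n) (Fin n) ℝ,
        Pᵀ = P → P = β • L P + C → P.PosSemidef) := by
  let T : Matrix (Fin n) (Fin n) ℝ →ₚ[ℝ] Matrix (Fin n) (Fin n) ℝ :=
    .mk₀ (β • secondMomentMap lam A₀ A₁) fun X hX =>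
      smul_nonneg hβ0.le (secondMomentMap_nonneg hlam0 hlam1 A₀ A₁ hX)
  have hT : ∀ X, β • L X = T X := fun X => by rw [hL]; rfl
  simp only [hT, transpose_eq_self_iff_isSelfAdjoint, ← nonneg_iff_posSemidef] at hlyap hC ⊢
  exact ⟨T.existsUnique_eq_map_add hΞ hlyap hC,
    fun hC₀ P hP hPC => T.nonneg_of_eq_map_add hΞ hlyap hP hC₀ hPC⟩

/-- Well-posedness of the discounted stochastic Lyapunov equation: under a Lyapunov
certificate of mean-square stability, `P = β 𝓛(P) + C` has a unique symmetric solution,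
which is positive semidefinite whenever `C` is. -/
theorem stmt7 (n : ℕ) (A₀ A₁ : Matrix (Fin n) (Fin n) ℝ)
    (lam : ℝ) (hlam0 : 0 ≤ lam) (hlam1 : lam ≤ 1)
    (β : ℝ) (hβ0 : 0 < β) (hβ1 : β ≤ 1)
    (L : Matrix (Fin n) (Fin n) ℝ → Matrix (Fin n) (Fin n) ℝ)
    (hL : ∀ X, L X = lam • (A₁ * X * A₁ᵀ) + (1 - lam) • (A₀ * X * A₀ᵀ))
    (Ξ : Matrix (Fin n) (Fin n) ℝ) (hΞ : Ξ.PosDef)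
    (hlyap : (Ξ - β • L Ξ).PosDef)
    (C : Matrix (Fin n) (Fin n) ℝ) (hC : Cᵀ = C) :
    (∃! P : Matrix (Fin n) (Fin n) ℝ, Pᵀ = P ∧ P = β • L P + C) ∧
      (C.PosSemidef → ∀ P : Matrix (Fin n) (Fin n) ℝ,
        Pᵀ = P → P = β • L P + C → P.PosSemidef) :=
  stmt7_general n A₀ A₁ lam hlam0 hlam1 β hβ0 L hL Ξ hΞ hlyap C hC
end

section
/- Let A₀, A₁ be n×n real matrices, λ ∈ [0,1], β ∈ (0,1], and define 𝓛(X) = λA₁XA₁ᵀ + (1-λ)A₀XA₀ᵀ for n×n real matrices X; let C be a symmetric n×n real matrix and define F(P) = β·𝓛(P) + C. Suppose there exists a symmetric positive definite matrix Ξ with Ξ - β·𝓛(Ξ) positive definite, and let P* be the unique symmetric matrix with P* = F(P*). If P⁽⁰⁾ is a symmetric matrix with F(P⁽⁰⁾) ⪯ P⁽⁰⁾, then the iterates P⁽ⁱ⁺¹⁾ = F(P⁽ⁱ⁾) satisfy P⁽ⁱ⁺¹⁾ ⪯ P⁽ⁱ⁾ for all i ≥ 0, and P⁽ⁱ⁾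 converges to P* as i → ∞. -/
/-! The map `T X = β 𝓛(X)` is linear and monotone for the Loewner order, and
`F X - F Y = T (X - Y)`. Hence `P⁽ⁱ⁺¹⁾ - P⁽ⁱ⁺²⁾ = T (P⁽ⁱ⁾ - P⁽ⁱ⁺¹⁾)` stays positive semidefinite,
and the errors `P⁽ⁱ⁾ - P*` are the iterates of `T` on `P⁽⁰⁾ - P*`. Positive definiteness of
`Ξ - T Ξ` gives `T Ξ ⪯ c Ξ` for some `c < 1`, and that of `Ξ` gives `-M Ξ ⪯ P⁽⁰⁾ - P* ⪯ M Ξ`.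
Applying the monotone map `T` repeatedly yields `-M cⁱ Ξ ⪯ P⁽ⁱ⁾ - P* ⪯ M cⁱ Ξ`, and
`-B ⪯ S ⪯ B` bounds every entry of `S` by the diagonal of `B`: `|S a b| ≤ (B a a + B b b) / 2`. -/

open Matrix Filter Topology
open scoped MatrixOrder

lemma Matrix.instIsOrderedModule {n : Type*} : IsOrderedModule ℝ (Matrix n n ℝ) :=
  .of_smul_nonneg fun _ ha _ hb => (hb.posSemidef.smul ha).nonneg

attribute [local instance] Matrix.instIsOrderedModule

section OrderedModule

variable {R E : Type*} [Semiring R] [PartialOrder R] [IsOrderedRing R]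
  [AddCommMonoid E] [Preorder E] [Module R E] [PosSMulMono R E]

lemma le_mul_pow_smul_of_map_le_smul {T : E →ₗ[R] E} (hT : Monotone T) {Ξ : E} {c M : R}
    (hc : 0 ≤ c) (hM : 0 ≤ M) (hTΞ : T Ξ ≤ c • Ξ) {D : ℕ → E} (hD : ∀ i, D (i + 1) = T (D i))
    (h0 : D 0 ≤ M • Ξ) (i : ℕ) : D i ≤ (M * c ^ i) • Ξ := by
  induction i with
  | zero => simpa using h0
  | succ i ih =>
    calc D (i + 1) = T (D i) := hD i
      _ ≤ T ((M * c ^ i) • Ξ) := hT ih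
      _ = (M * c ^ i) • T Ξ := map_smul T _ Ξ
      _ ≤ (M * c ^ i) • c • Ξ := smul_le_smul_of_nonneg_left hTΞ (mul_nonneg hM (pow_nonneg hc i))
      _ = (M * c ^ (i + 1)) • Ξ := by rw [smul_smul, pow_succ, mul_assoc]

end OrderedModule

namespace Matrix

variable {n : Type*} [Fintype n]

lemma PosSemidef.two_mul_abs_apply_le [DecidableEq n] {A : Matrix n n ℝ} (hA : A.PosSemidef)
    (a b : n) : 2 * |A a b| ≤ A a a + A b b := by
  have quad (s : ℝ) : 0 ≤ A a a + 2 * s * A a b + s ^ 2 * A b b := by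
    have h := hA.dotProduct_mulVec_nonneg (Pi.single a 1 + Pi.single b s)
    have hba : A b a = A a b := hA.isHermitian.apply a b
    simp only [star_trivial, mulVec_add, dotProduct_add, add_dotProduct, mulVec_single,
      single_dotProduct, Pi.smul_apply, col_apply, MulOpposite.op_one, one_smul,
      MulOpposite.smul_eq_mul_unop, MulOpposite.unop_op, one_mul, hba] at h
    linarith
  rcases abs_cases (A a b) with ⟨h, -⟩ | ⟨h, -⟩ <;> rw [h] <;> linarith [quad 1, quad (-1)]

lemma abs_apply_le_of_neg_le_of_le {S T : Matrix n n ℝ} (h₁ : -T ≤ S) (h₂ : S ≤ T) (a b : n) :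
    |S a b| ≤ (T a a + T b b) / 2 := by
  classical
  have hlo := (le_iff.1 h₁).two_mul_abs_apply_le a b
  have hup := (le_iff.1 h₂).two_mul_abs_apply_le a b
  simp only [sub_apply, neg_apply, sub_neg_eq_add] at hlo hup
  rw [abs_le]
  constructor <;> linarith [le_abs_self (S a b + T a b), neg_abs_le (S a b + T a b),
    le_abs_self (T a b - S a b), neg_abs_le (T a b - S a b)]

lemma tendsto_zero_of_neg_le_of_le {S T : ℕ → Matrix n n ℝ} (hT : Tendsto T atTop (𝓝 0))
    (h₁ : ∀ i, -T i ≤ S i) (h₂ : ∀ i, S i ≤ T i) : Tendsto S atTop (𝓝 0) := by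
  refine tendsto_pi_nhds.2 fun a => tendsto_pi_nhds.2 fun b => ?_
  have hdiag (c : n) : Tendsto (fun i => T i c c) atTop (𝓝 0) :=
    tendsto_pi_nhds.1 (tendsto_pi_nhds.1 hT c) c
  refine squeeze_zero_norm (fun i => abs_apply_le_of_neg_le_of_le (h₁ i) (h₂ i) a b) ?_
  simpa using ((hdiag a).add (hdiag b)).div_const 2

lemma PosDef.exists_pos_smul_mem_Icc [DecidableEq n] {G X : Matrix n n ℝ} (hG : G.PosDef)
    (hX : X.IsHermitian) : ∃ ε : ℝ, 0 < ε ∧ ε • X ∈ Set.Icc (-G) G := by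
  cases isEmpty_or_nonempty n
  · exact ⟨1, one_pos, le_of_eq (Subsingleton.elim _ _), le_of_eq (Subsingleton.elim _ _)⟩
  obtain ⟨r, hr, hrG⟩ := (CFC.exists_pos_algebraMap_le_iff hG.isHermitian.isSelfAdjoint).2
    fun x hx => (isStrictlyPositive_iff_posDef.2 hG).spectrum_pos hx
  obtain ⟨s, hs⟩ := (isCompact_iff_compactSpace.2 inferInstance :
    IsCompact (spectrum ℝ X)).isBounded.subset_closedBall 0
  have hspec : ∀ x ∈ spectrum ℝ X, |x| ≤ |s| + 1 := fun x hx => by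
    have := hs hx
    rw [Metric.mem_closedBall, Real.dist_0_eq_abs] at this
    linarith [le_abs_self s]
  have hXle : X ≤ algebraMap ℝ _ (|s| + 1) :=
    (le_algebraMap_iff_spectrum_le hX.isSelfAdjoint).2 fun x hx => (abs_le.1 (hspec x hx)).2
  have hleX : algebraMap ℝ _ (-(|s| + 1)) ≤ X :=
    (algebraMap_le_iff_le_spectrum hX.isSelfAdjoint).2 fun x hx => (abs_le.1 (hspec x hx)).1
  have hε : 0 < r / (|s| + 1) := by positivity
  have hscale : (r / (|s| + 1)) • algebraMap ℝ (Matrix n n ℝ) (|s| + 1) = algebraMap ℝ _ r := by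
    rw [Algebra.algebraMap_eq_smul_one, Algebra.algebraMap_eq_smul_one, smul_smul,
      div_mul_cancel₀ _ (by positivity)]
  refine ⟨r / (|s| + 1), hε, ?_, ?_⟩
  · calc -G ≤ -algebraMap ℝ _ r := neg_le_neg hrG
      _ = (r / (|s| + 1)) • algebraMap ℝ _ (-(|s| + 1)) := by rw [map_neg, smul_neg, hscale]
      _ ≤ (r / (|s| + 1)) • X := smul_le_smul_of_nonneg_left hleX hε.le
  · calc (r / (|s| + 1)) • X ≤ (r / (|s| + 1)) • algebraMap ℝ _ (|s| + 1) :=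
          smul_le_smul_of_nonneg_left hXle hε.le
      _ = algebraMap ℝ _ r := hscale
      _ ≤ G := hrG

lemma monotone_mul_mul_transpose (A : Matrix n n ℝ) : Monotone fun X => A * X * Aᵀ :=
  fun _ _ h => by
    simpa [star_eq_conjTranspose, conjTranspose_eq_transpose_of_trivial] using
      star_right_conjugate_le_conjugate h A

lemma exists_le_smul_of_posDef_sub_s8 [DecidableEq n] {Ξ Y : Matrix n n ℝ} (hΞ : Ξ.PosSemidef)
    (h : (Ξ - Y).PosDef) : ∃ c : ℝ, 0 ≤ c ∧ c < 1 ∧ Y ≤ c • Ξ := by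
  obtain ⟨ε, hε, -, hεΞ⟩ := h.exists_pos_smul_mem_Icc hΞ.isHermitian
  refine ⟨max (1 - ε) 0, le_max_right _ _, max_lt (by linarith) one_pos, ?_⟩
  calc Y ≤ Ξ - ε • Ξ := le_sub_comm.1 hεΞ
    _ = (1 - ε) • Ξ := by rw [sub_smul, one_smul]
    _ ≤ max (1 - ε) 0 • Ξ := smul_le_smul_of_nonneg_right (le_max_left _ _) hΞ.nonneg

theorem tendsto_zero_of_posDef_sub_map [DecidableEq n] {T : Matrix n n ℝ →ₗ[ℝ] Matrix n n ℝ}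
    (hT : Monotone T) {Ξ : Matrix n n ℝ} (hΞ : Ξ.PosDef) (hTΞ : (Ξ - T Ξ).PosDef)
    {D : ℕ → Matrix n n ℝ} (hD : ∀ i, D (i + 1) = T (D i)) (h0 : (D 0).IsHermitian) :
    Tendsto D atTop (𝓝 0) := by
  obtain ⟨c, hc0, hc1, hc⟩ := exists_le_smul_of_posDef_sub_s8 hΞ.posSemidef hTΞ
  obtain ⟨ε, hε, hlo, hup⟩ := hΞ.exists_pos_smul_mem_Icc h0
  have hscale {X : Matrix n n ℝ} (hX : ε • X ≤ Ξ) : X ≤ ε⁻¹ • Ξ := by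
    simpa [smul_smul, inv_mul_cancel₀ hε.ne'] using
      smul_le_smul_of_nonneg_left hX (inv_nonneg.2 hε.le)
  have hDneg (i : ℕ) : -D (i + 1) = T (-D i) := by rw [hD, map_neg]
  refine tendsto_zero_of_neg_le_of_le (T := fun i => (ε⁻¹ * c ^ i) • Ξ) ?_
    (fun i => neg_le.1 <| le_mul_pow_smul_of_map_le_smul (D := (-D ·)) hT hc0
      (inv_nonneg.2 hε.le) hc hDneg (hscale (by rwa [smul_neg, neg_le])) i)
    (le_mul_pow_smul_of_map_le_smul hT hc0 (inv_nonneg.2 hε.le) hc hD (hscale hup))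
  simpa using ((tendsto_pow_atTop_nhds_zero_of_lt_one hc0 hc1).const_mul ε⁻¹).smul_const Ξ

end Matrix

theorem stmt8_general (n : ℕ) (A₀ A₁ : Matrix (Fin n) (Fin n) ℝ)
    (lam : ℝ) (hlam0 : 0 ≤ lam) (hlam1 : lam ≤ 1)
    (β : ℝ) (hβ0 : 0 < β)
    (L : Matrix (Fin n) (Fin n) ℝ → Matrix (Fin n) (Fin n) ℝ)
    (hL : ∀ X, L X = lam • (A₁ * X * A₁ᵀ) + (1 - lam) • (A₀ * X * A₀ᵀ))
    (C : Matrix (Fin n) (Fin n) ℝ)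
    (F : Matrix (Fin n) (Fin n) ℝ → Matrix (Fin n) (Fin n) ℝ)
    (hF : ∀ P, F P = β • L P + C)
    (Ξ : Matrix (Fin n) (Fin n) ℝ) (hΞ : Ξ.PosDef)
    (hlyap : (Ξ - β • L Ξ).PosDef)
    (Pstar : Matrix (Fin n) (Fin n) ℝ) (hPstarSymm : Pstarᵀ = Pstar)
    (hPstarFix : Pstar = F Pstar)
    (P : ℕ → Matrix (Fin n) (Fin n) ℝ)
    (hP0symm : (P 0)ᵀ = P 0) (hP0 : (P 0 - F (P 0)).PosSemidef)
    (hPit : ∀ i, P (i + 1) = F (P i)) :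
    (∀ i, (P i - P (i + 1)).PosSemidef) ∧
      Tendsto P atTop (nhds Pstar) := by
  let T : Matrix (Fin n) (Fin n) ℝ →ₗ[ℝ] Matrix (Fin n) (Fin n) ℝ :=
    β • (lam • LinearMap.mulLeftRight ℝ (A₁, A₁ᵀ) + (1 - lam) • LinearMap.mulLeftRight ℝ (A₀, A₀ᵀ))
  have hTL : ⇑T = fun X => β • L X := by
    funext X
    simp [T, hL, LinearMap.mulLeftRight_apply]
  have hT : Monotone T := by
    rw [hTL]
    simpa only [hL] using
      (((monotone_mul_mul_transpose A₁).const_smul hlam0).add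
        ((monotone_mul_mul_transpose A₀).const_smul (sub_nonneg.2 hlam1))).const_smul hβ0.le
  have hTF (X Y) : F X - F Y = T (X - Y) := by
    rw [hF, hF, map_sub, hTL]
    abel
  refine ⟨fun i => ?_, ?_⟩
  · induction i with
    | zero => rwa [hPit]
    | succ i ih =>
      have hstep : P (i + 1) - P (i + 2) = T (P i - P (i + 1)) := by
        rw [← hTF, ← hPit, ← hPit]
      rw [hstep, ← nonneg_iff_posSemidef, ← map_zero T]
      exact hT ih.nonneg
  · have hD (i : ℕ) : P (i + 1) - Pstar = T (P i - Pstar) := by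
      rw [hPit, ← hTF, ← hPstarFix]
    have h0 : (P 0 - Pstar).IsHermitian :=
      isHermitian_iff_isSymm.2 (by rw [IsSymm, transpose_sub, hP0symm, hPstarSymm])
    have hTΞ : (Ξ - T Ξ).PosDef := by rwa [hTL]
    exact tendsto_sub_nhds_zero_iff.1
      (tendsto_zero_of_posDef_sub_map (D := (P · - Pstar)) hT hΞ hTΞ hD h0)

/-- Remark 3 of the paper: starting from any symmetric `P⁽⁰⁾` with `F(P⁽⁰⁾) ⪯ P⁽⁰⁾`,
the iterates `P⁽ⁱ⁺¹⁾ = F(P⁽ⁱ⁾)` of the affine Lyapunov operator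
`F(P) = β 𝓛(P) + C` are Loewner-nonincreasing and converge to the unique symmetric
fixed point `P*`. -/
theorem stmt8 (n : ℕ) (A₀ A₁ : Matrix (Fin n) (Fin n) ℝ)
    (lam : ℝ) (hlam0 : 0 ≤ lam) (hlam1 : lam ≤ 1)
    (β : ℝ) (hβ0 : 0 < β) (hβ1 : β ≤ 1)
    (L : Matrix (Fin n) (Fin n) ℝ → Matrix (Fin n) (Fin n) ℝ)
    (hL : ∀ X, L X = lam • (A₁ * X * A₁ᵀ) + (1 - lam) • (A₀ * X * A₀ᵀ))
    (C : Matrix (Fin n) (Fin n) ℝ) (hC : Cᵀ = C)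
    (F : Matrix (Fin n) (Fin n) ℝ → Matrix (Fin n) (Fin n) ℝ)
    (hF : ∀ P, F P = β • L P + C)
    (Ξ : Matrix (Fin n) (Fin n) ℝ) (hΞ : Ξ.PosDef)
    (hlyap : (Ξ - β • L Ξ).PosDef)
    (Pstar : Matrix (Fin n) (Fin n) ℝ) (hPstarSymm : Pstarᵀ = Pstar)
    (hPstarFix : Pstar = F Pstar)
    (hPstarUniq : ∀ Q : Matrix (Fin n) (Fin n) ℝ, Qᵀ = Q → Q = F Q → Q = Pstar)
    (P : ℕ → Matrix (Fin n) (Fin n) ℝ)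
    (hP0symm : (P 0)ᵀ = P 0) (hP0 : (P 0 - F (P 0)).PosSemidef)
    (hPit : ∀ i, P (i + 1) = F (P i)) :
    (∀ i, (P i - P (i + 1)).PosSemidef) ∧
      Tendsto P atTop (nhds Pstar) :=
  stmt8_general n A₀ A₁ lam hlam0 hlam1 β hβ0 L hL C F hF Ξ hΞ hlyap Pstar hPstarSymm hPstarFix P
    hP0symm hP0 hPit
end

section
/- Let A₀, A₁ be n×n real matrices and suppose there exists a symmetric positive definite n×n matrix P such that P - A₀ᵀPA₀ and P - A₁ᵀPA₁ are both positive definite (a common quadratic Lyapunov function). Let W and S₀ be positive semidefinite n×n matrices. Then for every switching sequence g : ℕ → {0,1}, the iteration S_{k+1} = A_{g(k)} S_k A_{g(k)}ᵀ + W with initial condition S₀ admits a uniform bound: there exists a symmetric matrix S̄ (depending on A₀, A₁, P, W, S₀ but not on g) such that S_k ⪯ S̄ for all k ≥ 0. -/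
/-!
The scalar `V(S) = tr (P S)` is a Lyapunov function for the covariance recursion. Since
`P ≤ tr P • 1`, the strict inequalities `AᵢᵀPAᵢ < P` upgrade to a uniform contraction
`AᵢᵀPAᵢ ≤ (1 - δ) P`, whence `V(S_{k+1}) ≤ (1 - δ) V(S_k) + tr (P W)` whatever the switch, and
`V` stays below `max (V(S₀)) (tr (P W) / δ)`. Finally `ε • 1 ≤ P` bounds `tr S_k` by `V(S_k) / ε`,
and a positive semidefinite matrix lies below its trace times the identity.
-/

open Matrix Filter Topology
open scoped MatrixOrder

namespace Matrix

variable {ι : Type*} [Fintype ι]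

lemma trace_mul_nonneg {X Y : Matrix ι ι ℝ} (hX : 0 ≤ X) (hY : 0 ≤ Y) :
    0 ≤ (X * Y).trace := by
  classical
  obtain ⟨B, rfl⟩ := CStarAlgebra.nonneg_iff_eq_star_mul_self.mp hX
  rw [star_eq_conjTranspose, Matrix.mul_assoc, trace_mul_comm]
  exact (nonneg_iff_posSemidef.mp hY).mul_mul_conjTranspose_same B |>.trace_nonneg

lemma trace_mul_le_trace_mul {X X' Y : Matrix ι ι ℝ} (hX : X ≤ X') (hY : 0 ≤ Y) :
    (X * Y).trace ≤ (X' * Y).trace := by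
  have := trace_mul_nonneg (sub_nonneg.mpr hX) hY
  rwa [Matrix.sub_mul, trace_sub, sub_nonneg] at this

variable [DecidableEq ι]

lemma le_trace_smul_one {S : Matrix ι ι ℝ} (hS : 0 ≤ S) : S ≤ S.trace • 1 := by
  have hS' := nonneg_iff_posSemidef.mp hS
  rw [← Algebra.algebraMap_eq_smul_one]
  refine le_algebraMap_of_spectrum_le (fun x hx => ?_) hS'.isHermitian.isSelfAdjoint
  obtain ⟨i, rfl⟩ := hS'.isHermitian.spectrum_real_eq_range_eigenvalues ▸ hx
  rw [hS'.isHermitian.trace_eq_sum_eigenvalues]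
  simpa using Finset.single_le_sum (fun j _ => hS'.eigenvalues_nonneg j) (Finset.mem_univ i)

lemma PosDef.eventually_smul_one_le {P : Matrix ι ι ℝ} (hP : P.PosDef) :
    ∀ᶠ ε : ℝ in 𝓝[>] 0, ε • 1 ≤ P := by
  cases isEmpty_or_nonempty ι
  · exact Eventually.of_forall fun ε => (Subsingleton.elim _ _).le
  obtain ⟨r, hr, hrP⟩ := (CFC.exists_pos_algebraMap_le_iff hP.isHermitian.isSelfAdjoint).2
    fun x hx => hP.isStrictlyPositive.spectrum_pos hx
  rw [Algebra.algebraMap_eq_smul_one] at hrP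
  filter_upwards [Ioc_mem_nhdsGT hr] with ε hε
  exact (smul_le_smul_of_nonneg_right hε.2 zero_le_one).trans hrP

end Matrix

lemma le_max_of_affine_contraction {v : ℕ → ℝ} {δ w : ℝ} (hδ₀ : 0 < δ) (hδ₁ : δ ≤ 1)
    (hv : ∀ k, v (k + 1) ≤ (1 - δ) * v k + w) (k : ℕ) : v k ≤ max (v 0) (w / δ) := by
  induction k with
  | zero => exact le_max_left _ _
  | succ k ih =>
    have hw : w ≤ δ * max (v 0) (w / δ) := (div_le_iff₀' hδ₀).1 (le_max_right _ _)
    nlinarith [hv k]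

section SwitchedSystem

variable {n ι : Type*} [Fintype n]

lemma nonneg_of_switched_recursion {A : ι → Matrix n n ℝ} {W : Matrix n n ℝ} {g : ℕ → ι}
    {S : ℕ → Matrix n n ℝ} (hW : 0 ≤ W) (hS : 0 ≤ S 0)
    (hrec : ∀ k, S (k + 1) = A (g k) * S k * (A (g k))ᵀ + W) (k : ℕ) : 0 ≤ S k := by
  induction k with
  | zero => exact hS
  | succ k ih =>
    rw [hrec k]
    exact add_nonneg ((nonneg_iff_posSemidef.mp ih).mul_mul_conjTranspose_same _).nonneg hW

lemma trace_mul_conj_add_le {A P S W : Matrix n n ℝ} {δ : ℝ} (hA : Aᵀ * P * A ≤ (1 - δ) • P)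
    (hS : 0 ≤ S) : (P * (A * S * Aᵀ + W)).trace ≤ (1 - δ) * (P * S).trace + (P * W).trace := by
  have hconj : (P * (A * S * Aᵀ)).trace = (Aᵀ * P * A * S).trace := by
    rw [← Matrix.mul_assoc, ← Matrix.mul_assoc, trace_mul_comm]
    simp only [Matrix.mul_assoc]
  rw [Matrix.mul_add, trace_add, hconj]
  have := trace_mul_le_trace_mul hA hS
  rw [Matrix.smul_mul, trace_smul, smul_eq_mul] at this
  linarith

variable [DecidableEq n]

lemma le_smul_one_of_trace_mul_le {P S : Matrix n n ℝ} {ε c : ℝ} (hε : 0 < ε)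
    (hεP : ε • 1 ≤ P) (hS : 0 ≤ S) (hc : (P * S).trace ≤ c) : S ≤ (c / ε) • 1 := by
  have htr : ε * S.trace ≤ c := by
    have := trace_mul_le_trace_mul hεP hS
    rw [Matrix.smul_mul, Matrix.one_mul, trace_smul, smul_eq_mul] at this
    linarith
  calc S ≤ S.trace • 1 := le_trace_smul_one hS
    _ ≤ (c / ε) • 1 := smul_le_smul_of_nonneg_right ((le_div_iff₀' hε).2 htr) zero_le_one

lemma exists_common_contraction [Finite ι] {A : ι → Matrix n n ℝ} {P : Matrix n n ℝ}
    (hP : P.PosDef) (hA : ∀ i, (P - (A i)ᵀ * P * A i).PosDef) :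
    ∃ δ : ℝ, 0 < δ ∧ δ ≤ 1 ∧ ∀ i, (A i)ᵀ * P * A i ≤ (1 - δ) • P := by
  obtain ⟨ε, hεA, hε : 0 < ε⟩ :=
    ((eventually_all.2 fun i => (hA i).eventually_smul_one_le).and self_mem_nhdsWithin).exists
  have htr : 0 ≤ P.trace := hP.posSemidef.trace_nonneg
  set δ := ε / (P.trace + ε)
  have hδ₀ : 0 < δ := by positivity
  have hδP : δ • P ≤ ε • 1 := calc
    δ • P ≤ δ • (P.trace • 1) :=
      smul_le_smul_of_nonneg_left (le_trace_smul_one hP.posSemidef.nonneg) hδ₀.le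
    _ = (δ * P.trace) • 1 := smul_smul _ _ _
    _ ≤ ε • 1 := by
      refine smul_le_smul_of_nonneg_right ?_ zero_le_one
      rw [div_mul_eq_mul_div, div_le_iff₀ (by positivity)]
      nlinarith
  refine ⟨δ, hδ₀, div_le_one_of_le₀ (by linarith) (by positivity), fun i => ?_⟩
  rw [sub_smul, one_smul]
  exact le_sub_comm.1 (hδP.trans (hεA i))

theorem exists_uniform_bound_of_common_lyapunov [Finite ι] (A : ι → Matrix n n ℝ)
    {P : Matrix n n ℝ} (hP : P.PosDef) (hA : ∀ i, (P - (A i)ᵀ * P * A i).PosDef)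
    {W S₀ : Matrix n n ℝ} (hW : 0 ≤ W) (hS₀ : 0 ≤ S₀) :
    ∃ Sbar : Matrix n n ℝ, Sbarᵀ = Sbar ∧
      ∀ (g : ℕ → ι) (S : ℕ → Matrix n n ℝ), S 0 = S₀ →
        (∀ k, S (k + 1) = A (g k) * S k * (A (g k))ᵀ + W) → ∀ k, S k ≤ Sbar := by
  obtain ⟨δ, hδ₀, hδ₁, hδA⟩ := exists_common_contraction hP hA
  obtain ⟨ε, hεP, hε : 0 < ε⟩ := (hP.eventually_smul_one_le.and self_mem_nhdsWithin).exists
  refine ⟨(max (P * S₀).trace ((P * W).trace / δ) / ε) • 1, by simp, ?_⟩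
  rintro g S rfl hrec k
  have hS := nonneg_of_switched_recursion hW hS₀ hrec
  refine le_smul_one_of_trace_mul_le hε hεP (hS k) ?_
  exact le_max_of_affine_contraction (v := fun k => (P * S k).trace) hδ₀ hδ₁
    (fun k => hrec k ▸ trace_mul_conj_add_le (hδA (g k)) (hS k)) k

end SwitchedSystem

/-- Remark 5 of the paper: a common quadratic Lyapunov function for `A₀` and `A₁` yields
a uniform upper bound, independent of the switching sequence, for the switched affine
covariance recursion `S_{k+1} = A_{g(k)} S_k A_{g(k)}ᵀ + W`. -/
theorem stmt9 (n : ℕ) (A₀ A₁ : Matrix (Fin n) (Fin n) ℝ)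
    (P : Matrix (Fin n) (Fin n) ℝ) (hP : P.PosDef)
    (h₀ : (P - A₀ᵀ * P * A₀).PosDef) (h₁ : (P - A₁ᵀ * P * A₁).PosDef)
    (W S₀ : Matrix (Fin n) (Fin n) ℝ) (hW : W.PosSemidef) (hS₀ : S₀.PosSemidef) :
    ∃ Sbar : Matrix (Fin n) (Fin n) ℝ, Sbarᵀ = Sbar ∧
      ∀ (g : ℕ → Fin 2) (S : ℕ → Matrix (Fin n) (Fin n) ℝ),
        S 0 = S₀ →
        (∀ k, S (k + 1) = ![A₀, A₁] (g k) * S k * (![A₀, A₁] (g k))ᵀ + W) →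
        ∀ k, (Sbar - S k).PosSemidef :=
  exists_uniform_bound_of_common_lyapunov ![A₀, A₁] hP (Fin.forall_fin_two.2 ⟨h₀, h₁⟩)
    hW.nonneg hS₀.nonneg
end

section
/- Let A₀, A₁ be n×n real matrices, λ ∈ [0,1], and define 𝓛(X) = λA₁XA₁ᵀ + (1-λ)A₀XA₀ᵀ for n×n real matrices X. Suppose there exists a symmetric positive definite matrix Ξ such that Ξ - 𝓛(Ξ) is positive definite. Then for every n×n real matrix W there exists a unique n×n matrix X̄ satisfying X̄ = 𝓛(X̄) + W, and for every initial matrix X₀ the iterates X_{i+1} = 𝓛(X_i) + W converge to X̄ as i → ∞ (entrywise). -/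
/-!
The Lyapunov inequality `𝓛(Ξ) ≺ Ξ` upgrades, by compactness of the unit sphere, to
`𝓛(Ξ) ⪯ ρ Ξ` for some `ρ < 1`. Measure a matrix `Y` by the smallest `C` with
`|aᵀ Y b| ≤ C (aᵀ Ξ a + bᵀ Ξ b)` for all vectors `a, b`: since `𝓛` is a convex combination of
congruences, this constant contracts by the factor `ρ` under `𝓛`, so `𝓛ᵏ X → 0` geometrically
for every (not necessarily symmetric) `X`. A linear map whose powers tend to zero has no nonzero
fixed point, so `1 - 𝓛` is invertible on the finite-dimensional space of matrices, which gives
the unique fixed point `X̄`; the error `Xᵢ - X̄ = 𝓛ⁱ (X₀ - X̄)` of the iteration tends to zero.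
-/

open Matrix Filter Topology

theorem eventually_le_mul_of_homogeneous {E : Type*} [NormedAddCommGroup E] [NormedSpace ℝ E]
    [FiniteDimensional ℝ E] {f g : E → ℝ} (hf : Continuous f) (hg : Continuous g)
    (hf_smul : ∀ (t : ℝ) x, f (t • x) = t ^ 2 * f x)
    (hg_smul : ∀ (t : ℝ) x, g (t • x) = t ^ 2 * g x)
    (hg_pos : ∀ x ≠ 0, 0 < g x) :
    ∀ᶠ c in atTop, ∀ x, f x ≤ c * g x := by
  have hpos_sphere : ∀ y ∈ Metric.sphere (0 : E) 1, 0 < g y := fun y hy =>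
    hg_pos y (ne_zero_of_mem_unit_sphere ⟨y, hy⟩)
  obtain ⟨M, hM⟩ := (isCompact_sphere (0 : E) 1).bddAbove_image
    (hf.continuousOn.div hg.continuousOn fun y hy => (hpos_sphere y hy).ne')
  filter_upwards [eventually_ge_atTop M] with c hc x
  rcases eq_or_ne x 0 with rfl | hx
  · have hf0 : f 0 = 0 := by simpa using hf_smul 0 0
    have hg0 : g 0 = 0 := by simpa using hg_smul 0 0
    simp [hf0, hg0]
  have hy : ‖x‖⁻¹ • x ∈ Metric.sphere (0 : E) 1 := by simp [norm_smul, hx]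
  have hgy := hpos_sphere _ hy
  have hfy : f (‖x‖⁻¹ • x) ≤ c * g (‖x‖⁻¹ • x) :=
    ((div_le_iff₀ hgy).1 (hM ⟨_, hy, rfl⟩)).trans (mul_le_mul_of_nonneg_right hc hgy.le)
  have hx' : x = ‖x‖ • ‖x‖⁻¹ • x := by simp [smul_smul, hx]
  rw [hx', hf_smul, hg_smul, mul_left_comm c]
  exact mul_le_mul_of_nonneg_left hfy (sq_nonneg _)

namespace Matrix

variable {m : Type*} [Fintype m]

lemma dotProduct_mul_mul_transpose_mulVec (A Y : Matrix m m ℝ) (a b : m → ℝ) :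
    a ⬝ᵥ (A * Y * Aᵀ) *ᵥ b = (Aᵀ *ᵥ a) ⬝ᵥ Y *ᵥ (Aᵀ *ᵥ b) := by
  rw [← mulVec_mulVec, ← mulVec_mulVec, dotProduct_mulVec]
  simp only [mulVec_transpose]

lemma dotProduct_smul_mulVec_smul (Y : Matrix m m ℝ) (t : ℝ) (a b : m → ℝ) :
    (t • a) ⬝ᵥ Y *ᵥ (t • b) = t ^ 2 * (a ⬝ᵥ Y *ᵥ b) := by
  rw [mulVec_smul, dotProduct_smul, smul_dotProduct, smul_eq_mul, smul_eq_mul]; ring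

lemma PosDef.dotProduct_mulVec_pos' {P : Matrix m m ℝ} (hP : P.PosDef) {x : m → ℝ} (hx : x ≠ 0) :
    0 < x ⬝ᵥ P *ᵥ x := by
  simpa using hP.dotProduct_mulVec_pos hx

theorem PosDef.exists_abs_dotProduct_mulVec_le {P : Matrix m m ℝ} (hP : P.PosDef)
    (Y : Matrix m m ℝ) :
    ∃ C, 0 ≤ C ∧ ∀ a b, |a ⬝ᵥ Y *ᵥ b| ≤ C * (a ⬝ᵥ P *ᵥ a + b ⬝ᵥ P *ᵥ b) := by
  have hC := eventually_le_mul_of_homogeneous (E := (m → ℝ) × (m → ℝ))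
    (f := fun p => |p.1 ⬝ᵥ Y *ᵥ p.2|) (g := fun p => p.1 ⬝ᵥ P *ᵥ p.1 + p.2 ⬝ᵥ P *ᵥ p.2)
    (by fun_prop) (by fun_prop)
    (fun t p => by
      simp only [Prod.smul_fst, Prod.smul_snd, dotProduct_smul_mulVec_smul, abs_mul, abs_sq])
    (fun t p => by simp only [Prod.smul_fst, Prod.smul_snd, dotProduct_smul_mulVec_smul, mul_add])
    (fun p hp => by
      rcases p with ⟨a, b⟩
      rcases eq_or_ne a 0 with rfl | ha
      · have hb : b ≠ 0 := by simpa using hp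
        simpa using hP.dotProduct_mulVec_pos' hb
      · exact add_pos_of_pos_of_nonneg (hP.dotProduct_mulVec_pos' ha)
          (by simpa using hP.posSemidef.dotProduct_mulVec_nonneg b))
  obtain ⟨C, hC, hC0⟩ := (hC.and (eventually_ge_atTop 0)).exists
  exact ⟨C, hC0, fun a b => hC (a, b)⟩

theorem exists_dotProduct_mulVec_le_mul_of_posDef_sub {P Q : Matrix m m ℝ} (h : (P - Q).PosDef) :
    ∃ ρ, 0 ≤ ρ ∧ ρ < 1 ∧ ∀ x, x ⬝ᵥ Q *ᵥ x ≤ ρ * (x ⬝ᵥ P *ᵥ x) := by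
  have hc := eventually_le_mul_of_homogeneous (f := fun x => x ⬝ᵥ P *ᵥ x)
    (g := fun x => x ⬝ᵥ (P - Q) *ᵥ x) (by fun_prop) (by fun_prop)
    (fun t x => dotProduct_smul_mulVec_smul P t x x)
    (fun t x => dotProduct_smul_mulVec_smul (P - Q) t x x)
    fun x hx => h.dotProduct_mulVec_pos' hx
  obtain ⟨c, hc, hc1⟩ := (hc.and (eventually_ge_atTop 1)).exists
  have hc0 : 0 < c := by linarith
  refine ⟨1 - c⁻¹, by linarith [inv_le_one_of_one_le₀ hc1], by simpa using hc0, fun x => ?_⟩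
  have := (inv_mul_le_iff₀ hc0).mpr (hc x)
  rw [sub_mulVec, dotProduct_sub] at this
  linarith

def lyapunovMap (A₀ A₁ : Matrix m m ℝ) (lam : ℝ) : Module.End ℝ (Matrix m m ℝ) where
  toFun X := lam • (A₁ * X * A₁ᵀ) + (1 - lam) • (A₀ * X * A₀ᵀ)
  map_add' X Y := by simp only [Matrix.mul_add, Matrix.add_mul, smul_add]; abel
  map_smul' c X := by
    simp only [Matrix.mul_smul, Matrix.smul_mul, RingHom.id_apply]
    module

variable {A₀ A₁ : Matrix m m ℝ} {lam : ℝ}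

lemma lyapunovMap_apply (X : Matrix m m ℝ) :
    lyapunovMap A₀ A₁ lam X = lam • (A₁ * X * A₁ᵀ) + (1 - lam) • (A₀ * X * A₀ᵀ) := rfl

lemma dotProduct_lyapunovMap_mulVec (Y : Matrix m m ℝ) (a b : m → ℝ) :
    a ⬝ᵥ lyapunovMap A₀ A₁ lam Y *ᵥ b =
      lam * ((A₁ᵀ *ᵥ a) ⬝ᵥ Y *ᵥ (A₁ᵀ *ᵥ b)) + (1 - lam) * ((A₀ᵀ *ᵥ a) ⬝ᵥ Y *ᵥ (A₀ᵀ *ᵥ b)) := by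
  simp only [lyapunovMap_apply, add_mulVec, smul_mulVec, dotProduct_add, dotProduct_smul,
    smul_eq_mul, dotProduct_mul_mul_transpose_mulVec]

theorem abs_dotProduct_lyapunovMap_mulVec_le (h0 : 0 ≤ lam) (h1 : lam ≤ 1)
    {P Y : Matrix m m ℝ} {C : ℝ} (hY : ∀ a b, |a ⬝ᵥ Y *ᵥ b| ≤ C * (a ⬝ᵥ P *ᵥ a + b ⬝ᵥ P *ᵥ b))
    (a b : m → ℝ) :
    |a ⬝ᵥ lyapunovMap A₀ A₁ lam Y *ᵥ b| ≤
      C * (a ⬝ᵥ lyapunovMap A₀ A₁ lam P *ᵥ a + b ⬝ᵥ lyapunovMap A₀ A₁ lam P *ᵥ b) := by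
  simp only [dotProduct_lyapunovMap_mulVec]
  have h1' : 0 ≤ 1 - lam := by linarith
  calc _ ≤ lam * |(A₁ᵀ *ᵥ a) ⬝ᵥ Y *ᵥ (A₁ᵀ *ᵥ b)| + (1 - lam) * |(A₀ᵀ *ᵥ a) ⬝ᵥ Y *ᵥ (A₀ᵀ *ᵥ b)| := by
        refine (abs_add_le _ _).trans ?_
        rw [abs_mul, abs_mul, abs_of_nonneg h0, abs_of_nonneg h1']
    _ ≤ lam * (C * ((A₁ᵀ *ᵥ a) ⬝ᵥ P *ᵥ (A₁ᵀ *ᵥ a) + (A₁ᵀ *ᵥ b) ⬝ᵥ P *ᵥ (A₁ᵀ *ᵥ b))) +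
          (1 - lam) * (C * ((A₀ᵀ *ᵥ a) ⬝ᵥ P *ᵥ (A₀ᵀ *ᵥ a) + (A₀ᵀ *ᵥ b) ⬝ᵥ P *ᵥ (A₀ᵀ *ᵥ b))) :=
        add_le_add (mul_le_mul_of_nonneg_left (hY _ _) h0) (mul_le_mul_of_nonneg_left (hY _ _) h1')
    _ = _ := by ring

theorem tendsto_lyapunovMap_pow_apply (h0 : 0 ≤ lam) (h1 : lam ≤ 1) {P : Matrix m m ℝ}
    (hP : P.PosDef) (hlyap : (P - lyapunovMap A₀ A₁ lam P).PosDef) (X : Matrix m m ℝ) :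
    Tendsto (fun k => (lyapunovMap A₀ A₁ lam ^ k) X) atTop (𝓝 0) := by
  classical
  obtain ⟨ρ, hρ0, hρ1, hρ⟩ := exists_dotProduct_mulVec_le_mul_of_posDef_sub hlyap
  obtain ⟨C, hC0, hC⟩ := hP.exists_abs_dotProduct_mulVec_le X
  have hbound : ∀ k a b, |a ⬝ᵥ (lyapunovMap A₀ A₁ lam ^ k) X *ᵥ b| ≤
      C * ρ ^ k * (a ⬝ᵥ P *ᵥ a + b ⬝ᵥ P *ᵥ b) := by
    intro k
    induction k with
    | zero => simpa using hC
    | succ k ih =>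
      intro a b
      have hCk : 0 ≤ C * ρ ^ k := by positivity
      rw [pow_succ', Module.End.mul_apply]
      refine (abs_dotProduct_lyapunovMap_mulVec_le h0 h1 ih a b).trans ?_
      calc _ ≤ C * ρ ^ k * (ρ * (a ⬝ᵥ P *ᵥ a) + ρ * (b ⬝ᵥ P *ᵥ b)) :=
            mul_le_mul_of_nonneg_left (add_le_add (hρ a) (hρ b)) hCk
        _ = _ := by ring
  have hentry : ∀ k i j, |((lyapunovMap A₀ A₁ lam ^ k) X) i j| ≤ C * (P i i + P j j) * ρ ^ k := by
    intro k i j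
    simpa [mul_right_comm] using hbound k (Pi.single i 1) (Pi.single j 1)
  refine tendsto_pi_nhds.2 fun i => tendsto_pi_nhds.2 fun j => ?_
  refine squeeze_zero_norm (fun k => hentry k i j) ?_
  simpa using (tendsto_pow_atTop_nhds_zero_of_lt_one hρ0 hρ1).const_mul (C * (P i i + P j j))

end Matrix

theorem Module.End.exists_unique_fixedPoint_add_tendsto {K E : Type*} [Field K] [AddCommGroup E]
    [Module K E] [FiniteDimensional K E] [TopologicalSpace E] [ContinuousAdd E] [T2Space E]
    (L : Module.End K E) (hL : ∀ x, Tendsto (fun k => (L ^ k) x) atTop (𝓝 0)) (w : E) :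
    ∃ xbar, xbar = L xbar + w ∧ (∀ y, y = L y + w → y = xbar) ∧
      ∀ x : ℕ → E, (∀ i, x (i + 1) = L (x i) + w) → Tendsto x atTop (𝓝 xbar) := by
  have fixed_iff : ∀ y, y = L y + w ↔ (1 - L) y = w := fun y => by
    rw [LinearMap.sub_apply, Module.End.one_apply, sub_eq_iff_eq_add']
  have hinj : Function.Injective (1 - L : Module.End K E) := by
    refine (injective_iff_map_eq_zero _).2 fun z hz => ?_
    have hfix : L z = z := (sub_eq_zero.1 (by simpa using hz)).symm
    exact tendsto_nhds_unique (by simp [Module.End.pow_apply, Function.iterate_fixed hfix]) (hL z)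
  obtain ⟨xbar, hxbar⟩ := LinearMap.injective_iff_surjective.1 hinj w
  have hfix : xbar = L xbar + w := (fixed_iff xbar).2 hxbar
  refine ⟨xbar, hfix, fun y hy => hinj ((fixed_iff y).1 hy ▸ hxbar.symm),
    fun x hx => ?_⟩
  have herror : ∀ i, x i = xbar + (L ^ i) (x 0 - xbar) := by
    intro i
    induction i with
    | zero => simp
    | succ i ih =>
      rw [hx i, ih, pow_succ', Module.End.mul_apply, map_add, add_right_comm, ← hfix]
  simpa only [add_zero, ← herror] using (hL (x 0 - xbar)).const_add xbar

/-- Under a Lyapunov certificate of mean-square stability, the affine recursion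
`X_{i+1} = 𝓛(X_i) + W` has a unique fixed point `X̄`, to which the iterates converge
from any initial condition. -/
theorem stmt13 (n : ℕ) (A₀ A₁ : Matrix (Fin n) (Fin n) ℝ)
    (lam : ℝ) (hlam0 : 0 ≤ lam) (hlam1 : lam ≤ 1)
    (L : Matrix (Fin n) (Fin n) ℝ → Matrix (Fin n) (Fin n) ℝ)
    (hL : ∀ X, L X = lam • (A₁ * X * A₁ᵀ) + (1 - lam) • (A₀ * X * A₀ᵀ))
    (Ξ : Matrix (Fin n) (Fin n) ℝ) (hΞ : Ξ.PosDef) (hlyap : (Ξ - L Ξ).PosDef)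
    (W : Matrix (Fin n) (Fin n) ℝ) :
    ∃ Xbar : Matrix (Fin n) (Fin n) ℝ,
      Xbar = L Xbar + W ∧
      (∀ Y : Matrix (Fin n) (Fin n) ℝ, Y = L Y + W → Y = Xbar) ∧
      ∀ X : ℕ → Matrix (Fin n) (Fin n) ℝ,
        (∀ i, X (i + 1) = L (X i) + W) →
        Tendsto X atTop (nhds Xbar) := by
  obtain rfl : L = lyapunovMap A₀ A₁ lam := funext hL
  exact (lyapunovMap A₀ A₁ lam).exists_unique_fixedPoint_add_tendsto
    (tendsto_lyapunovMap_pow_apply hlam0 hlam1 hΞ hlyap) W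
end
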